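/- arXiv:2312.13965 — 5 statements merged into one kernel-verified Lean document; each statement's English description precedes it below -/
import Mathlib

section
/- If G is a 3-uniform hypergraph with at least two edges, then there is a constant c > 0 such that r(G;q) ≥ c·q^{1/3} for every q ≥ 1. -/
/-!
Colour the triples of `Fin N` injectively by `q` colours, which is possible once `C(N, 3) ≤ q`:
then distinct edges of any copy of `G` get distinct colours, so no copy is monochromatic. Hence
`q < C(r, 3) ≤ r³` for `r = r(G; q)`, and `c = 1` works. This needs `r(G; q)` to be attained
(an empty `sInf` would be `0`), which is the finite hypergraph Ramsey theorem; it follows by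
compactness from the infinite one, both arguments running through nonprincipal ultrafilters on `ℕ`.
-/

/-- A 3-uniform hypergraph with vertices drawn from ℕ. -/
structure ThreeGraph where
  verts : Finset ℕ
  edges : Finset (Finset ℕ)
  edge_card : ∀ e ∈ edges, e.card = 3
  edge_sub : ∀ e ∈ edges, e ⊆ verts

/-- A 3-graph is tripartite if its vertex set can be partitioned into three parts so that
every edge has exactly one vertex in each part. -/
def Tripartite (G : ThreeGraph) : Prop :=
  ∃ V1 V2 V3 : Finset ℕ,
    Disjoint V1 V2 ∧ Disjoint V1 V3 ∧ Disjoint V2 V3 ∧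
    V1 ∪ V2 ∪ V3 = G.verts ∧
    ∀ e ∈ G.edges, (e ∩ V1).card = 1 ∧ (e ∩ V2).card = 1 ∧ (e ∩ V3).card = 1

/-- Membership in the family 𝒰₁: there is a vertex subset intersecting every edge in
exactly one vertex. -/
def InU1 (G : ThreeGraph) : Prop :=
  ∃ W : Finset ℕ, W ⊆ G.verts ∧ ∀ e ∈ G.edges, (e ∩ W).card = 1

/-- `Reducible G H F` : `G` is reducible to the pair `(H, F)` by collapsing a collapsible
set `U` (with `F = G[U]`), where the new vertex of `H` is `v`. -/
def Reducible (G H F : ThreeGraph) : Prop :=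
  ∃ (U : Finset ℕ) (v : ℕ),
    U ⊆ G.verts ∧ 2 ≤ U.card ∧ U.card < G.verts.card ∧
    (∀ e ∈ G.edges, (e ∩ U).card ≠ 2) ∧
    v ∉ G.verts ∧
    H.verts = (G.verts \ U) ∪ {v} ∧
    H.edges = G.edges.filter (fun e => e ∩ U = ∅) ∪
      (G.edges.filter (fun e => (e ∩ U).card = 1)).image (fun e => (e \ U) ∪ {v}) ∧
    F.verts = U ∧
    F.edges = G.edges.filter (fun e => e ⊆ U)

/-- `MemU i G` means `G ∈ 𝒰ᵢ`: `𝒰₀` is the family of tripartite 3-graphs, `𝒰₁` of 3-graphs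
with a vertex set meeting every edge exactly once, the families are nested, and for `i ≥ 2`,
`G ∈ 𝒰ᵢ` whenever `G` is reducible to `(H, F)` with `H ∈ 𝒰ᵢ₋₁` and `F ∈ 𝒰ᵢ`. -/
inductive MemU : ℕ → ThreeGraph → Prop where
  | zero (G : ThreeGraph) : Tripartite G → MemU 0 G
  | one (G : ThreeGraph) : InU1 G → MemU 1 G
  | mono (i : ℕ) (G : ThreeGraph) : MemU i G → MemU (i + 1) G
  | reduce (i : ℕ) (G H F : ThreeGraph) :
      Reducible G H F → MemU (i + 1) H → MemU (i + 2) F → MemU (i + 2) G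

/-- `G ∈ 𝒰 = ⋃ᵢ 𝒰ᵢ`. -/
def InU (G : ThreeGraph) : Prop := ∃ i, MemU i G

/-- A monochromatic copy of `G` in color `i` under the coloring `χ` of the triples of
`Fin N`. -/
def MonoCopy {N q : ℕ} (χ : Finset (Fin N) → Fin q) (i : Fin q) (G : ThreeGraph) : Prop :=
  ∃ f : ℕ → Fin N, Set.InjOn f ↑G.verts ∧ ∀ e ∈ G.edges, χ (e.image f) = i

/-- `N` vertices suffice to find, in any `q`-coloring, a monochromatic copy of `Gs i` in
color `i` for some `i`. -/
def RamseyProp {q : ℕ} (Gs : Fin q → ThreeGraph) (N : ℕ) : Prop :=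
  ∀ χ : Finset (Fin N) → Fin q, ∃ i : Fin q, MonoCopy χ i (Gs i)

/-- The Ramsey number `r(G₁, …, G_q)`. -/
noncomputable def ramseyNumber {q : ℕ} (Gs : Fin q → ThreeGraph) : ℕ :=
  sInf {N | RamseyProp Gs N}

/-- The `q`-color Ramsey number `r(G; q)`. -/
noncomputable def rq (G : ThreeGraph) (q : ℕ) : ℕ :=
  ramseyNumber (fun _ : Fin q => G)


open Filter

namespace Ultrafilter

variable {α β : Type*} [Finite β]

theorem exists_eventually_eq (U : Ultrafilter α) (g : α → β) : ∃ c, ∀ᶠ a in U, g a = c := by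
  obtain ⟨c, hc⟩ := (U.map g).eq_pure_of_finite
  exact ⟨c, mem_map.1 (hc ▸ mem_pure.2 rfl : ({c} : Set β) ∈ U.map g)⟩

noncomputable def finLim (U : Ultrafilter α) (g : α → β) : β :=
  Classical.choose (U.exists_eventually_eq g)

theorem eventually_eq_finLim (U : Ultrafilter α) (g : α → β) : ∀ᶠ a in U, g a = U.finLim g :=
  Classical.choose_spec (U.exists_eventually_eq g)

end Ultrafilter

section InfiniteRamsey

variable {β : Type*} [Finite β]

noncomputable def liftColoring (U : Ultrafilter ℕ) (χ : Finset ℕ → β) (s : Finset ℕ) : β :=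
  U.finLim fun b => χ (insert b s)

/-- Each new element `b` of `F` is chosen so that `L^[k] χ (insert b t) = L^[k+1] χ t` for all
`t ⊆ F` and `k < r`, where `L = liftColoring U`; this is a `U`-large condition on `b`. -/
theorem exists_finset_iterate_liftColoring (U : Ultrafilter ℕ) (hU : (U : Filter ℕ) ≤ cofinite)
    (χ : Finset ℕ → β) (r n : ℕ) :
    ∃ F : Finset ℕ, F.card = n ∧ ∀ s ⊆ F, ∀ k, s.card + k = r →
      (liftColoring U)^[k] χ s = (liftColoring U)^[r] χ ∅ := by
  induction n with
  | zero =>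
    refine ⟨∅, rfl, fun s hs k hk => ?_⟩
    obtain rfl := Finset.subset_empty.1 hs
    rw [Finset.card_empty, zero_add] at hk
    rw [hk]
  | succ n ih =>
    obtain ⟨F, hF, hFr⟩ := ih
    have hgood : ∀ᶠ b in U, b ∉ F ∧ ∀ t ∈ F.powerset, ∀ k ∈ Finset.range r,
        (liftColoring U)^[k] χ (insert b t) = (liftColoring U)^[k + 1] χ t := by
      refine (show ∀ᶠ b in U, b ∉ F from hU F.finite_toSet.compl_mem_cofinite).and ?_
      simp only [eventually_all_finset, Function.iterate_succ_apply']
      exact fun t _ k _ => Ultrafilter.eventually_eq_finLim _ _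
    obtain ⟨b, hbF, hb⟩ := hgood.exists
    refine ⟨insert b F, by rw [Finset.card_insert_of_notMem hbF, hF], fun s hs k hk => ?_⟩
    by_cases hbs : b ∈ s
    · have hsub : s.erase b ⊆ F := Finset.subset_insert_iff.1 hs
      have hcard : (s.erase b).card + 1 = s.card := Finset.card_erase_add_one hbs
      rw [← Finset.insert_erase hbs,
        hb _ (Finset.mem_powerset.2 hsub) k (Finset.mem_range.2 (by omega))]
      exact hFr _ hsub _ (by omega)
    · exact hFr s ((Finset.subset_insert_iff_of_notMem hbs).1 hs) k hk

theorem exists_homogeneous_finset (χ : Finset ℕ → β) (r : ℕ) :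
    ∃ c, ∀ n, ∃ F : Finset ℕ, F.card = n ∧ ∀ s ⊆ F, s.card = r → χ s = c := by
  obtain ⟨U, hU⟩ := Ultrafilter.exists_le (cofinite : Filter ℕ)
  refine ⟨(liftColoring U)^[r] χ ∅, fun n => ?_⟩
  obtain ⟨F, hF, hFr⟩ := exists_finset_iterate_liftColoring U hU χ r n
  exact ⟨F, hF, fun s hs hsr => hFr s hs 0 hsr⟩

/-- Compactness: counterexamples on every `Fin N` would have an ultrafilter limit colouring of
`Finset ℕ` without large homogeneous sets. -/
theorem exists_homogeneous_finset_of_fin (r n : ℕ) :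
    ∃ N, ∀ χ : Finset (Fin N) → β,
      ∃ F : Finset (Fin N), F.card = n ∧ ∃ c, ∀ s ⊆ F, s.card = r → χ s = c := by
  by_contra! hbad
  choose χN hχN using hbad
  obtain ⟨U, hU⟩ := Ultrafilter.exists_le (cofinite : Filter ℕ)
  let χ : Finset ℕ → β := fun e =>
    U.finLim fun N => χN N (e.preimage Fin.val Fin.val_injective.injOn)
  obtain ⟨c, hc⟩ := exists_homogeneous_finset χ r
  obtain ⟨F, hF, hFc⟩ := hc n
  have hgood : ∀ᶠ N in U, (∀ x ∈ F, x < N) ∧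
      ∀ s ∈ F.powerset, χN N (s.preimage Fin.val Fin.val_injective.injOn) = χ s := by
    refine ((eventually_all_finset F).2 fun x _ => ?_).and
      ((eventually_all_finset _).2 fun s _ => U.eventually_eq_finLim _)
    exact hU.trans Nat.cofinite_eq_atTop.le (eventually_gt_atTop x)
  obtain ⟨N, hFN, hχ⟩ := hgood.exists
  obtain ⟨s, hs, hsr, hsc⟩ := hχN N (F.attachFin hFN) (by rw [Finset.card_attachFin, hF]) c
  have hsF : s.map Fin.valEmbedding ⊆ F := by
    intro x hx
    obtain ⟨y, hy, rfl⟩ := Finset.mem_map.1 hx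
    exact (Finset.mem_attachFin hFN).1 (hs hy)
  apply hsc
  rw [← Finset.preimage_map Fin.valEmbedding s]
  exact (hχ _ (Finset.mem_powerset.2 hsF)).trans (hFc _ hsF (by rw [Finset.card_map, hsr]))

end InfiniteRamsey

theorem ThreeGraph.image_injOn_edges (G : ThreeGraph) {γ : Type*} [DecidableEq γ] {f : ℕ → γ}
    (hf : Set.InjOn f G.verts) : Set.InjOn (Finset.image f) G.edges := fun _ he _ he' h =>
  (Finset.image_eq_image_iff_of_injOn hf (G.edge_sub _ he) (G.edge_sub _ he')).1 h

theorem ThreeGraph.card_image_of_mem_edges (G : ThreeGraph) {γ : Type*} [DecidableEq γ]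
    {f : ℕ → γ} (hf : Set.InjOn f G.verts) {e : Finset ℕ} (he : e ∈ G.edges) :
    (e.image f).card = 3 := by
  rw [Finset.card_image_of_injOn (hf.mono (Finset.coe_subset.2 (G.edge_sub e he))),
    G.edge_card e he]

theorem exists_ramseyProp {q : ℕ} (Gs : Fin q → ThreeGraph) : ∃ N, RamseyProp Gs N := by
  set n := Finset.univ.sup fun i => (Gs i).verts.card
  obtain ⟨N, hN⟩ := exists_homogeneous_finset_of_fin (β := Fin q) 3 (n + 1)
  refine ⟨N, fun χ => ?_⟩
  obtain ⟨F, hF, c, hc⟩ := hN χ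
  have : Nonempty (Fin N) :=
    (Finset.card_pos.1 (by omega : 0 < F.card)).to_subtype.map Subtype.val
  have hle : (Gs c).verts.card ≤ n :=
    Finset.le_sup (f := fun i => (Gs i).verts.card) (Finset.mem_univ c)
  obtain ⟨f, hfF, hf⟩ := (Gs c).verts.finite_toSet.exists_injOn_of_encard_le
    (t := (F : Set (Fin N))) (by simp only [Set.encard_coe_eq_coe_finsetCard]; norm_cast; omega)
  refine ⟨c, f, hf, fun e he => hc _ ?_ ((Gs c).card_image_of_mem_edges hf he)⟩
  exact Finset.image_subset_iff.2 fun x hx => hfF ((Gs c).edge_sub e he hx)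

theorem ramseyProp_ramseyNumber {q : ℕ} (Gs : Fin q → ThreeGraph) :
    RamseyProp Gs (ramseyNumber Gs) :=
  Nat.sInf_mem (exists_ramseyProp Gs)

/-- Colouring the triples of `Fin N` injectively leaves no two edges of the same colour. -/
theorem lt_choose_three_of_ramseyProp {q N : ℕ} (hq : 0 < q) {Gs : Fin q → ThreeGraph}
    (hGs : ∀ i, 2 ≤ (Gs i).edges.card) (hN : RamseyProp Gs N) : q < N.choose 3 := by
  by_contra! hle
  have : Nonempty (Fin q) := ⟨⟨0, hq⟩⟩
  obtain ⟨χ, -, hχ⟩ := (Finset.powersetCard 3 (Finset.univ : Finset (Fin N))).finite_toSet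
    |>.exists_injOn_of_encard_le (t := (Set.univ : Set (Fin q))) (by
      simp [Set.encard_coe_eq_coe_finsetCard, Finset.card_powersetCard]; exact_mod_cast hle)
  obtain ⟨i, f, hf, hmono⟩ := hN χ
  obtain ⟨e, he, e', he', hne⟩ := Finset.one_lt_card.1 (hGs i)
  have hsame : χ (e.image f) = χ (e'.image f) := (hmono e he).trans (hmono e' he').symm
  refine hne ((Gs i).image_injOn_edges hf he he' (hχ ?_ ?_ hsame))
  all_goals simp [Finset.mem_powersetCard, (Gs i).card_image_of_mem_edges hf, he, he']

/-- If `G` is a 3-uniform hypergraph with at least two edges, then there is a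
constant `c > 0` such that `r(G; q) ≥ c · q^(1/3)` for every `q ≥ 1`. -/
theorem stmt0 (G : ThreeGraph) (hG : 2 ≤ G.edges.card) :
    ∃ c : ℝ, 0 < c ∧ ∀ q : ℕ, 1 ≤ q → c * (q : ℝ) ^ ((1 : ℝ) / 3) ≤ (rq G q : ℝ) := by
  refine ⟨1, one_pos, fun q hq => ?_⟩
  have hcube : q ≤ rq G q ^ 3 :=
    ((lt_choose_three_of_ramseyProp hq (fun _ => hG) (ramseyProp_ramseyNumber _)).trans_le
      (Nat.choose_le_pow _ 3)).le
  rw [one_mul, one_div, Real.rpow_inv_le_iff_of_pos (by positivity) (by positivity) (by norm_num)]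
  exact_mod_cast hcube
end

section
/- If G is a tripartite 3-uniform hypergraph, then there is a constant C = C(G) such that r(G;q) ≤ q^C for all sufficiently large q. -/
/-!
Only the tripartite structure of `G` matters: if every vertex label is below `t`, then `G` embeds
into the complete tripartite 3-graph `K(t,t,t)`, so it suffices to find a monochromatic `K(t,t,t)`.
Split `3M` vertices into three blocks of size `M`; some colour class contains at least `M³/q` of
the `M³` transversal triples. Erdős' iterated Kővári–Sós–Turán argument then yields a complete
`K(t,t,t)` in that colour as soon as `M` is a fixed power of `8qt` (depending only on `t`): first a
`t`-set `T` in the first block whose triples with many pairs `(y, z)` all have that colour, then a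
`K_{t,t}` among those pairs. Hence `r(G; q) ≤ 3M`, a polynomial in `q`.
-/

open Finset

theorem Nat.choose_mul_le_pow_mul_choose {c D t : ℕ} (h : 2 * t ≤ D + 2) :
    (c * D).choose t ≤ (2 * c) ^ t * D.choose t := by
  have hbase : c * D ≤ 2 * c * (D + 1 - t) := by
    calc c * D ≤ c * (2 * (D + 1 - t)) := Nat.mul_le_mul_left c (by omega)
      _ = 2 * c * (D + 1 - t) := by ring
  refine Nat.le_of_mul_le_mul_left ?_ t.factorial_pos
  calc t.factorial * (c * D).choose t = (c * D).descFactorial t :=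
        (Nat.descFactorial_eq_factorial_mul_choose _ _).symm
    _ ≤ (c * D) ^ t := Nat.descFactorial_le_pow _ _
    _ ≤ (2 * c) ^ t * (D + 1 - t) ^ t := by rw [← mul_pow]; exact Nat.pow_le_pow_left hbase t
    _ ≤ (2 * c) ^ t * D.descFactorial t := Nat.mul_le_mul_left _ (Nat.pow_sub_le_descFactorial D t)
    _ = t.factorial * ((2 * c) ^ t * D.choose t) := by
        rw [Nat.descFactorial_eq_factorial_mul_choose]; ring

namespace Finset

variable {α ι : Type*} [DecidableEq α]

theorem exists_common_subset_of_lt_sum_choose {U : Finset α} {W : Finset ι} {N : ι → Finset α}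
    (hN : ∀ w ∈ W, N w ⊆ U) {s t : ℕ} (h : (s - 1) * (#U).choose t < ∑ w ∈ W, (#(N w)).choose t) :
    ∃ T ⊆ U, #T = t ∧ s ≤ #{w ∈ W | T ⊆ N w} := by
  have hcount : ∑ w ∈ W, (#(N w)).choose t = ∑ T ∈ U.powersetCard t, #{w ∈ W | T ⊆ N w} := by
    calc ∑ w ∈ W, (#(N w)).choose t = ∑ w ∈ W, #{T ∈ U.powersetCard t | T ⊆ N w} := by
          refine sum_congr rfl fun w hw => ?_
          rw [← card_powersetCard]
          congr 1
          ext T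
          simp only [mem_powersetCard, mem_filter]
          exact ⟨fun h => ⟨⟨h.1.trans (hN w hw), h.2⟩, h.1⟩, fun h => ⟨h.2, h.1.2⟩⟩
      _ = _ := sum_card_bipartiteAbove_eq_sum_card_bipartiteBelow _
  rw [hcount, ← card_powersetCard, mul_comm, ← smul_eq_mul, ← sum_const] at h
  obtain ⟨T, hT, hlt⟩ := exists_lt_of_sum_lt h
  rw [mem_powersetCard] at hT
  exact ⟨T, hT.1, hT.2, by omega⟩

theorem card_le_mul_card_filter_le {W : Finset ι} {d : ι → ℕ} {m K D : ℕ} (hm : 0 < m)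
    (hd : ∀ w ∈ W, d w ≤ m) (hdense : #W * m ≤ K * ∑ w ∈ W, d w) (hD : 2 * K * D ≤ m) :
    #W ≤ 2 * K * #{w ∈ W | D ≤ d w} := by
  set h := #{w ∈ W | D ≤ d w}
  have hsplit : ∑ w ∈ W, d w ≤ h * m + #W * D := by
    rw [← sum_filter_add_sum_filter_not W (fun w => D ≤ d w)]
    gcongr
    · exact sum_le_card_nsmul _ _ _ fun w hw => hd w (mem_filter.mp hw).1
    · calc ∑ w ∈ W with ¬D ≤ d w, d w ≤ #{w ∈ W | ¬D ≤ d w} • D :=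
            sum_le_card_nsmul _ _ _ fun w hw => (not_le.mp (mem_filter.mp hw).2).le
        _ ≤ #W * D := Nat.mul_le_mul_right D (card_filter_le _ _)
  have key : 2 * (#W * m) ≤ 2 * K * h * m + #W * m :=
    calc 2 * (#W * m) ≤ 2 * (K * (h * m + #W * D)) :=
          Nat.mul_le_mul_left 2 (hdense.trans (Nat.mul_le_mul_left K hsplit))
      _ = 2 * K * h * m + #W * (2 * K * D) := by ring
      _ ≤ 2 * K * h * m + #W * m := by gcongr
  exact Nat.le_of_mul_le_mul_right (by linarith) hm

theorem exists_common_subset_of_dense {U : Finset α} {W : Finset ι} {N : ι → Finset α}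
    (hN : ∀ w ∈ W, N w ⊆ U) {K s t : ℕ} (hK : 0 < K) (ht : 0 < t) (hU : 4 * K * t ≤ #U)
    (hdense : #W * #U ≤ K * ∑ w ∈ W, #(N w)) (hW : (s - 1) * (8 * K) ^ (t + 1) < #W) :
    ∃ T ⊆ U, #T = t ∧ s ≤ #{w ∈ W | T ⊆ N w} := by
  refine exists_common_subset_of_lt_sum_choose hN ?_
  -- The `w` with `#(N w) ≥ D` carry half of the density, and each contains `D.choose t` many
  -- `t`-subsets, which is within a factor `(8K)^t` of `(#U).choose t`.
  set D := #U / (2 * K)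
  have hDt : 2 * t ≤ D := (Nat.le_div_iff_mul_le (by omega)).mpr (by linarith)
  have hUD : #U ≤ 4 * K * D := by
    have h1 : #U < 2 * K * (D + 1) := Nat.lt_mul_div_succ _ (by omega)
    nlinarith
  have hmarkov : #W ≤ 2 * K * #{w ∈ W | D ≤ #(N w)} :=
    card_le_mul_card_filter_le (lt_of_lt_of_le (by positivity) hU)
      (fun w hw => card_le_card (hN w hw)) hdense (Nat.mul_div_le _ _)
  have hchooseU : (#U).choose t ≤ (8 * K) ^ t * D.choose t :=
    calc (#U).choose t ≤ (4 * K * D).choose t := Nat.choose_le_choose t hUD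
      _ ≤ (2 * (4 * K)) ^ t * D.choose t := Nat.choose_mul_le_pow_mul_choose (by linarith)
      _ = (8 * K) ^ t * D.choose t := by ring
  have hchooseW : #{w ∈ W | D ≤ #(N w)} * D.choose t ≤ ∑ w ∈ W, (#(N w)).choose t :=
    calc #{w ∈ W | D ≤ #(N w)} * D.choose t ≤ ∑ w ∈ W with D ≤ #(N w), (#(N w)).choose t :=
          card_nsmul_le_sum _ _ _ fun w hw => Nat.choose_le_choose t (mem_filter.mp hw).2
      _ ≤ ∑ w ∈ W, (#(N w)).choose t := sum_le_sum_of_subset (filter_subset _ _)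
  have hpos : 0 < D.choose t := Nat.choose_pos (by omega)
  have key : 2 * K * (4 * ((s - 1) * (#U).choose t)) < 2 * K * ∑ w ∈ W, (#(N w)).choose t :=
    calc 2 * K * (4 * ((s - 1) * (#U).choose t))
        ≤ 8 * K * ((s - 1) * ((8 * K) ^ t * D.choose t)) := by
          rw [← mul_assoc, show 2 * K * 4 = 8 * K by ring]
          exact Nat.mul_le_mul_left _ (Nat.mul_le_mul_left _ hchooseU)
      _ = (s - 1) * (8 * K) ^ (t + 1) * D.choose t := by ring
      _ < #W * D.choose t := Nat.mul_lt_mul_of_pos_right hW hpos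
      _ ≤ 2 * K * (#{w ∈ W | D ≤ #(N w)} * D.choose t) := by
          rw [← mul_assoc]; exact Nat.mul_le_mul_right _ hmarkov
      _ ≤ 2 * K * ∑ w ∈ W, (#(N w)).choose t := Nat.mul_le_mul_left _ hchooseW
  have := Nat.lt_of_mul_lt_mul_left key
  omega

end Finset

section

variable {α β γ : Type*} [Fintype α] [Fintype β] [Fintype γ]

theorem exists_complete_bipartite_of_dense [DecidableEq β] {t P : ℕ} (ht : 0 < t) (hP : 8 ≤ P)
    (htP : 4 * t ≤ P) (hβ : Fintype.card β = P ^ ((t + 1) * (t + 2) + 1))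
    (hγ : Fintype.card γ = P ^ ((t + 1) * (t + 2) + 1)) (R : γ → Finset β)
    (hR : Fintype.card β * Fintype.card γ ≤ P ^ (t + 1) * ∑ z, #(R z)) :
    ∃ (B : Finset β) (C : Finset γ), #B = t ∧ #C = t ∧ ∀ y ∈ B, ∀ z ∈ C, y ∈ R z := by
  have hsize : 4 * P ^ (t + 1) * t ≤ Fintype.card β :=
    calc 4 * P ^ (t + 1) * t = P ^ (t + 1) * (4 * t) := by ring
      _ ≤ P ^ (t + 2) := by rw [pow_succ P (t + 1)]; exact Nat.mul_le_mul_left _ htP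
      _ ≤ Fintype.card β := by rw [hβ]; exact Nat.pow_le_pow_right (by omega) (by nlinarith)
  have hmany : (t - 1) * (8 * P ^ (t + 1)) ^ (t + 1) < Fintype.card γ :=
    calc (t - 1) * (8 * P ^ (t + 1)) ^ (t + 1) ≤ (t - 1) * (P ^ (t + 2)) ^ (t + 1) := by
          rw [pow_succ P (t + 1), mul_comm 8]; gcongr
      _ < P * (P ^ (t + 2)) ^ (t + 1) := Nat.mul_lt_mul_of_pos_right (by omega) (by positivity)
      _ = Fintype.card γ := by rw [hγ, ← pow_mul, ← pow_succ']; ring_nf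
  obtain ⟨B, -, hB, hBC⟩ := exists_common_subset_of_dense (U := univ) (W := univ) (N := R)
    (fun _ _ => subset_univ _) (by positivity) ht hsize (by simpa [mul_comm] using hR) hmany
  obtain ⟨C, hC, hCt⟩ := exists_subset_card_eq hBC
  exact ⟨B, C, hB, hCt, fun y hy z hz => (mem_filter.mp (hC hz)).2 hy⟩

theorem exists_complete_tripartite_of_dense [DecidableEq α] [DecidableEq β] {q t P : ℕ}
    (hq : 0 < q) (ht : 0 < t) (hqP : 8 * q ≤ P) (htP : 4 * t ≤ P)
    (hα : Fintype.card α = P ^ ((t + 1) * (t + 2) + 1))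
    (hβ : Fintype.card β = P ^ ((t + 1) * (t + 2) + 1))
    (hγ : Fintype.card γ = P ^ ((t + 1) * (t + 2) + 1)) (N : β × γ → Finset α)
    (hN : Fintype.card α * Fintype.card β * Fintype.card γ ≤ q * ∑ p, #(N p)) :
    ∃ (T : Finset α) (B : Finset β) (C : Finset γ), #T = t ∧ #B = t ∧ #C = t ∧
      ∀ x ∈ T, ∀ y ∈ B, ∀ z ∈ C, x ∈ N (y, z) := by
  set a := (t + 1) * (t + 2) + 1 with ha
  set s := P ^ (a + (t + 1) ^ 2 + 1)
  have hP : 0 < P := by omega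
  have hpairs : Fintype.card β * Fintype.card γ = P ^ (t + 1) * s := by
    rw [hβ, hγ, ← pow_add, ← pow_add, ha]; ring_nf
  have hsize : 4 * q * t ≤ Fintype.card α :=
    calc 4 * q * t ≤ P ^ 2 := by nlinarith
      _ ≤ Fintype.card α := by rw [hα]; exact Nat.pow_le_pow_right (by omega) (by nlinarith)
  have hmany : (s - 1) * (8 * q) ^ (t + 1) < Fintype.card (β × γ) :=
    calc (s - 1) * (8 * q) ^ (t + 1) ≤ (s - 1) * P ^ (t + 1) := by gcongr
      _ < s * P ^ (t + 1) :=
          Nat.mul_lt_mul_of_pos_right (Nat.sub_lt (pow_pos hP _) one_pos) (pow_pos hP _)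
      _ = Fintype.card (β × γ) := by rw [Fintype.card_prod, hpairs, mul_comm]
  obtain ⟨T, -, hT, hTW⟩ := exists_common_subset_of_dense (U := univ) (W := univ) (N := N)
    (fun _ _ => subset_univ _) hq ht hsize
    (by rw [card_univ, card_univ, Fintype.card_prod]; linarith) hmany
  have hcount : ∑ z : γ, #{y | T ⊆ N (y, z)} = #{p | T ⊆ N p} := by
    rw [card_filter, Fintype.sum_prod_type_right]
    simp only [card_filter]
  obtain ⟨B, C, hB, hC, hBC⟩ := exists_complete_bipartite_of_dense ht (by omega) htP hβ hγ
    (fun z => {y | T ⊆ N (y, z)}) (by rw [hpairs, hcount]; exact Nat.mul_le_mul_left _ hTW)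
  exact ⟨T, B, C, hT, hB, hC, fun x hx y hy z hz => (mem_filter.mp (hBC y hy z hz)).2 hx⟩

end

def HasMonoCompleteTripartite {N q : ℕ} (χ : Finset (Fin N) → Fin q) (i : Fin q) (t : ℕ) : Prop :=
  ∃ φ : Fin 3 × Fin t ↪ Fin N, ∀ a b c : Fin t, χ {φ (0, a), φ (1, b), φ (2, c)} = i

theorem exists_hasMonoCompleteTripartite {q t P : ℕ} (hq : 0 < q) (ht : 0 < t) (hqP : 8 * q ≤ P)
    (htP : 4 * t ≤ P) (χ : Finset (Fin (3 * P ^ ((t + 1) * (t + 2) + 1))) → Fin q) :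
    ∃ i, HasMonoCompleteTripartite χ i t := by
  generalize hM : P ^ ((t + 1) * (t + 2) + 1) = M at χ
  let ψ : Fin 3 × Fin M ≃ Fin (3 * M) := finProdFinEquiv
  let N (i : Fin q) (p : Fin M × Fin M) : Finset (Fin M) :=
    {x | χ {ψ (0, x), ψ (1, p.1), ψ (2, p.2)} = i}
  have hfiber : ∀ p, ∑ i, #(N i p) = M := fun p => by
    rw [← card_eq_sum_card_fiberwise fun x _ => mem_univ _, card_univ, Fintype.card_fin]
  have htotal : ∑ _i : Fin q, M * M * M = ∑ i, q * ∑ p, #(N i p) :=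
    calc ∑ _i : Fin q, M * M * M = q * ∑ _p : Fin M × Fin M, M := by simp [mul_comm]
      _ = ∑ i, q * ∑ p, #(N i p) := by
          rw [← mul_sum, sum_comm]; simp only [hfiber]
  obtain ⟨i, -, hi⟩ := exists_le_of_sum_le ⟨⟨0, hq⟩, mem_univ _⟩ htotal.le
  have hcard : Fintype.card (Fin M) = P ^ ((t + 1) * (t + 2) + 1) := by rw [Fintype.card_fin, hM]
  obtain ⟨T, B, C, hT, hB, hC, hTBC⟩ := exists_complete_tripartite_of_dense hq ht hqP htP
    hcard hcard hcard (N i) (by simpa only [Fintype.card_fin] using hi)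
  let S : Fin 3 → Finset (Fin M) := ![T, B, C]
  have hS : ∀ j, #(S j) = t := by
    intro j; fin_cases j <;> assumption
  refine ⟨i, ⟨fun p => ψ (p.1, (S p.1).orderEmbOfFin (hS p.1) p.2), ?_⟩, fun a b c => ?_⟩
  · rintro ⟨j, a⟩ ⟨k, b⟩ h
    obtain ⟨rfl, hab⟩ := Prod.mk.inj (ψ.injective h)
    simp_all
  · exact (mem_filter.mp (hTBC _ (orderEmbOfFin_mem T hT a) _ (orderEmbOfFin_mem B hB b) _
      (orderEmbOfFin_mem C hC c))).2

theorem Finset.exists_eq_triple_of_card_inter_eq_one {α : Type*} [DecidableEq α]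
    {e V₁ V₂ V₃ : Finset α} (he : e ⊆ V₁ ∪ V₂ ∪ V₃) (h₁ : #(e ∩ V₁) = 1) (h₂ : #(e ∩ V₂) = 1)
    (h₃ : #(e ∩ V₃) = 1) : ∃ a ∈ V₁, ∃ b ∈ V₂, ∃ c ∈ V₃, e = {a, b, c} := by
  obtain ⟨a, ha⟩ := card_eq_one.mp h₁
  obtain ⟨b, hb⟩ := card_eq_one.mp h₂
  obtain ⟨c, hc⟩ := card_eq_one.mp h₃
  refine ⟨a, (mem_inter.mp (ha ▸ mem_singleton_self a)).2, b,
    (mem_inter.mp (hb ▸ mem_singleton_self b)).2, c,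
    (mem_inter.mp (hc ▸ mem_singleton_self c)).2, ?_⟩
  rw [← inter_eq_left.mpr he, inter_union_distrib_left, inter_union_distrib_left, ha, hb, hc]
  simp only [insert_eq, union_assoc]

theorem monoCopy_of_hasMonoCompleteTripartite {G : ThreeGraph} (hG : Tripartite G)
    {N q t : ℕ} {χ : Finset (Fin N) → Fin q} {i : Fin q} (ht : 0 < t)
    (hvt : ∀ v ∈ G.verts, v < t) (h : HasMonoCompleteTripartite χ i t) : MonoCopy χ i G := by
  obtain ⟨V₁, V₂, V₃, h₁₂, h₁₃, h₂₃, hV, hedge⟩ := hG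
  obtain ⟨φ, hφ⟩ := h
  let part (v : ℕ) : Fin 3 := if v ∈ V₁ then 0 else if v ∈ V₂ then 1 else 2
  let f (v : ℕ) : Fin N := φ (part v, ⟨v % t, Nat.mod_lt v ht⟩)
  refine ⟨f, fun u hu v hv huv => ?_, fun e he => ?_⟩
  · have hmod : u % t = v % t := congrArg (fun p => p.2.val) (φ.injective huv)
    rwa [Nat.mod_eq_of_lt (hvt u hu), Nat.mod_eq_of_lt (hvt v hv)] at hmod
  · obtain ⟨he₁, he₂, he₃⟩ := hedge e he
    obtain ⟨a, ha, b, hb, c, hc, rfl⟩ :=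
      exists_eq_triple_of_card_inter_eq_one (hV ▸ G.edge_sub e he) he₁ he₂ he₃
    have hpa : part a = 0 := if_pos ha
    have hpb : part b = 1 := by simp [part, disjoint_right.mp h₁₂ hb, hb]
    have hpc : part c = 2 := by simp [part, disjoint_right.mp h₁₃ hc, disjoint_right.mp h₂₃ hc]
    simp only [image_insert, image_singleton, f, hpa, hpb, hpc]
    exact hφ _ _ _

/-- If `G` is a tripartite 3-uniform hypergraph, then there is a constant
`C = C(G)` such that `r(G; q) ≤ q ^ C` for all sufficiently large `q`. -/
theorem stmt1 (G : ThreeGraph) (hG : Tripartite G) :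
    ∃ C : ℕ, ∃ q₀ : ℕ, ∀ q : ℕ, q₀ ≤ q → rq G q ≤ q ^ C := by
  set t := G.verts.sup id + 1
  have ht : 0 < t := Nat.succ_pos _
  have hvt : ∀ v ∈ G.verts, v < t := fun v hv => Nat.lt_succ_of_le (le_sup (f := id) hv)
  set a := (t + 1) * (t + 2) + 1
  refine ⟨2 * a, 24 * t, fun q hq => ?_⟩
  have hq0 : 0 < q := by omega
  have hramsey : RamseyProp (fun _ : Fin q => G) (3 * (8 * q * t) ^ a) := fun χ => by
    obtain ⟨i, hi⟩ := exists_hasMonoCompleteTripartite hq0 ht (by nlinarith) (by nlinarith) χ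
    exact ⟨i, monoCopy_of_hasMonoCompleteTripartite hG ht hvt hi⟩
  calc rq G q ≤ 3 * (8 * q * t) ^ a := Nat.sInf_le hramsey
    _ ≤ 3 ^ a * (8 * q * t) ^ a := Nat.mul_le_mul_right _ (Nat.le_self_pow (by omega) 3)
    _ = (24 * t * q) ^ a := by rw [← mul_pow]; ring
    _ ≤ (q * q) ^ a := by gcongr
    _ = q ^ (2 * a) := by rw [← sq, ← pow_mul]
end

section
/- For every ℓ ≥ 1 and every 3-graph G ∈ U_ℓ, there is a constant C = C(G) such that r(G;q) ≤ 2^{C q^ℓ log q} for all q ≥ 2. -/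
open Finset

section Copies

variable {N q : ℕ}

structure IsMonoCopy (χ : Finset (Fin N) → Fin q) (S : Finset (Fin N)) (i : Fin q)
    (A : ThreeGraph) (f : ℕ → Fin N) : Prop where
  injOn : Set.InjOn f A.verts
  mapsTo : Set.MapsTo f A.verts S
  color : ∀ e ∈ A.edges, χ (e.image f) = i

namespace IsMonoCopy

variable {χ : Finset (Fin N) → Fin q} {S T : Finset (Fin N)} {i : Fin q} {A : ThreeGraph}
  {f g : ℕ → Fin N}

theorem mono (h : IsMonoCopy χ S i A f) (hST : S ⊆ T) : IsMonoCopy χ T i A f :=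
  ⟨h.injOn, fun _ ha => hST (h.mapsTo ha), h.color⟩

theorem congr (h : IsMonoCopy χ S i A f) (hfg : Set.EqOn f g A.verts) : IsMonoCopy χ S i A g where
  injOn := h.injOn.congr hfg
  mapsTo := fun a ha => hfg ha ▸ h.mapsTo ha
  color e he := by
    rw [← image_congr (hfg.mono (A.edge_sub e he))]
    exact h.color e he

end IsMonoCopy

/-- `r(A 0, …, A (q - 1)) ≤ n`, for colourings of the triples of any set of `n` points. -/
def IsRamseyBound (A : Fin q → ThreeGraph) (n : ℕ) : Prop :=
  ∀ ⦃N : ℕ⦄ (χ : Finset (Fin N) → Fin q) (S : Finset (Fin N)), n ≤ S.card →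
    ∃ i f, IsMonoCopy χ S i (A i) f

theorem IsRamseyBound.mono {A : Fin q → ThreeGraph} {n n' : ℕ} (h : IsRamseyBound A n)
    (hn : n ≤ n') : IsRamseyBound A n' :=
  fun _ χ S hS => h χ S (hn.trans hS)

theorem rq_le_of_isRamseyBound {G : ThreeGraph} {n : ℕ} (h : IsRamseyBound (fun _ : Fin q => G) n) :
    rq G q ≤ n := by
  refine Nat.sInf_le fun χ => ?_
  obtain ⟨i, f, hf⟩ := h χ univ (by simp)
  exact ⟨i, f, hf.injOn, hf.color⟩

end Copies

section GraphRamsey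

variable {α : Type*} [LinearOrder α] {q : ℕ}

/-- Repeatedly taking the least point as pivot and keeping its majority colour class. -/
theorem exists_pivot_chain (hq : 1 ≤ q) (c : Finset α → Fin q) :
    ∀ (t : ℕ) (S : Finset α), (2 * q) ^ t ≤ S.card →
      ∃ P ⊆ S, P.card = t ∧ ∃ d : α → Fin q, ∀ x ∈ P, ∀ y ∈ P, x < y → c {x, y} = d x := by
  intro t
  induction t with
  | zero => exact fun S _ => ⟨∅, empty_subset S, rfl, fun _ => ⟨0, hq⟩, by simp⟩
  | succ t ih =>
    intro S hS
    have hSne : S.Nonempty := card_pos.mp (lt_of_lt_of_le (by positivity) hS)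
    set v := S.min' hSne
    have hcard : (univ : Finset (Fin q)).card * (2 * q) ^ t ≤ (S.erase v).card := by
      rw [card_erase_of_mem (S.min'_mem hSne), card_univ, Fintype.card_fin]
      have : 1 ≤ q * (2 * q) ^ t := Nat.one_le_iff_ne_zero.mpr (by positivity)
      have : (2 * q) ^ (t + 1) = q * (2 * q) ^ t + q * (2 * q) ^ t := by ring
      omega
    obtain ⟨j, -, hj⟩ := exists_le_card_fiber_of_mul_le_card_of_maps_to
      (f := fun y => c {v, y}) (fun _ _ => mem_univ _) (univ_nonempty_iff.mpr ⟨⟨0, hq⟩⟩) hcard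
    obtain ⟨P, hPS, hPcard, d, hP⟩ := ih _ hj
    have hP' : ∀ y ∈ P, v < y ∧ y ∈ S ∧ c {v, y} = j := fun y hy => by
      obtain ⟨hyS, hyj⟩ := mem_filter.mp (hPS hy)
      obtain ⟨hyv, hyS⟩ := mem_erase.mp hyS
      exact ⟨lt_of_le_of_ne (S.min'_le y hyS) hyv.symm, hyS, hyj⟩
    have hvP : v ∉ P := fun h => lt_irrefl v (hP' v h).1
    refine ⟨insert v P, insert_subset (S.min'_mem hSne) fun y hy => (hP' y hy).2.1,
      by rw [card_insert_of_notMem hvP, hPcard], Function.update d v j, ?_⟩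
    intro x hx y hy hxy
    rcases mem_insert.mp hx with rfl | hx
    · rcases mem_insert.mp hy with rfl | hy
      · exact absurd hxy (lt_irrefl _)
      · rw [Function.update_self]; exact (hP' y hy).2.2
    · rcases mem_insert.mp hy with rfl | hy
      · exact absurd ((hP' x hx).1.trans hxy) (lt_irrefl _)
      · rw [Function.update_of_ne (ne_of_mem_of_not_mem hx hvP)]; exact hP x hx y hy hxy

theorem exists_monochromatic_clique (hq : 1 ≤ q) (m : ℕ) (c : Finset α → Fin q) (S : Finset α)
    (hS : (2 * q) ^ (q * m) ≤ S.card) :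
    ∃ i, ∃ T ⊆ S, T.card = m ∧ ∀ x ∈ T, ∀ y ∈ T, x ≠ y → c {x, y} = i := by
  obtain ⟨P, hPS, hPcard, d, hP⟩ := exists_pivot_chain hq c (q * m) S hS
  obtain ⟨i, -, hi⟩ := exists_le_card_fiber_of_mul_le_card_of_maps_to (s := P) (f := d) (n := m)
    (fun _ _ => mem_univ _) (univ_nonempty_iff.mpr ⟨⟨0, hq⟩⟩) (by simp [hPcard])
  obtain ⟨T, hT, hTcard⟩ := exists_subset_card_eq hi
  have hT' : ∀ x ∈ T, x ∈ P ∧ d x = i := fun x hx => mem_filter.mp (hT hx)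
  refine ⟨i, T, fun x hx => hPS (hT' x hx).1, hTcard, fun x hx y hy hxy => ?_⟩
  rcases hxy.lt_or_gt with h | h
  · rw [hP x (hT' x hx).1 y (hT' y hy).1 h, (hT' x hx).2]
  · rw [pair_comm, hP y (hT' y hy).1 x (hT' x hx).1 h, (hT' y hy).2]

end GraphRamsey

section Crosscut

variable {N q : ℕ}

theorem exists_injOn_mapsTo {α β : Type*} [Nonempty β] {a : Finset α} {b : Finset β}
    (h : a.card ≤ b.card) : ∃ f : α → β, Set.InjOn f a ∧ Set.MapsTo f a b := by
  obtain ⟨f, hf, hinj⟩ := a.finite_toSet.exists_injOn_of_encard_le (t := (b : Set β))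
    (by rw [Set.encard_coe_eq_coe_finsetCard, Set.encard_coe_eq_coe_finsetCard]; exact_mod_cast h)
  exact ⟨f, hinj, hf⟩

theorem exists_eq_triple_of_card_inter_eq_one {e W : Finset ℕ} (he : e.card = 3)
    (heW : (e ∩ W).card = 1) : ∃ u x y, u ∈ W ∧ x ∉ W ∧ y ∉ W ∧ x ≠ y ∧ e = {u, x, y} := by
  obtain ⟨u, hu⟩ := card_eq_one.mp heW
  obtain ⟨x, y, hxy, hexy⟩ : ∃ x y, x ≠ y ∧ e \ W = {x, y} :=
    card_eq_two.mp (by have := card_inter_add_card_sdiff e W; omega)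
  have hu' : u ∈ e ∩ W := hu ▸ mem_singleton_self u
  have hx : x ∈ e \ W := by simp [hexy]
  have hy : y ∈ e \ W := by simp [hexy]
  refine ⟨u, x, y, (mem_inter.mp hu').2, (mem_sdiff.mp hx).2, (mem_sdiff.mp hy).2, hxy, ?_⟩
  rw [← sdiff_union_inter e W, hu, hexy, union_comm]
  rfl

theorem exists_isMonoCopy_of_crosscut [Nonempty (Fin N)] {χ : Finset (Fin N) → Fin q}
    {S X Z : Finset (Fin N)} {i : Fin q} {A : ThreeGraph} {W : Finset ℕ}
    (hW : ∀ e ∈ A.edges, (e ∩ W).card = 1) (hWZ : W.card ≤ Z.card)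
    (hAX : (A.verts \ W).card ≤ X.card) (hXS : X ⊆ S) (hZS : Z ⊆ S) (hXZ : Disjoint X Z)
    (hlink : ∀ z ∈ Z, ∀ x ∈ X, ∀ y ∈ X, x ≠ y → χ {z, x, y} = i) :
    ∃ f, IsMonoCopy χ S i A f := by
  classical
  obtain ⟨fW, hfW, hfWZ⟩ := exists_injOn_mapsTo hWZ
  obtain ⟨fR, hfR, hfRX⟩ := exists_injOn_mapsTo hAX
  have hR : ∀ a ∈ A.verts, a ∉ W → a ∈ A.verts \ W := fun a ha haW => mem_sdiff.mpr ⟨ha, haW⟩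
  have hWX : ∀ a ∈ W, ∀ b ∈ A.verts, b ∉ W → fW a ≠ fR b := fun a ha b hb hbW h =>
    disjoint_left.mp hXZ (h ▸ hfRX (hR b hb hbW) : fW a ∈ X) (hfWZ ha)
  refine ⟨W.piecewise fW fR, ⟨?_, ?_, ?_⟩⟩
  · intro a ha b hb hab
    by_cases haW : a ∈ W <;> by_cases hbW : b ∈ W
    · rw [piecewise_eq_of_mem _ _ _ haW, piecewise_eq_of_mem _ _ _ hbW] at hab
      exact hfW haW hbW hab
    · rw [piecewise_eq_of_mem _ _ _ haW, piecewise_eq_of_notMem _ _ _ hbW] at hab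
      exact absurd hab (hWX a haW b hb hbW)
    · rw [piecewise_eq_of_notMem _ _ _ haW, piecewise_eq_of_mem _ _ _ hbW] at hab
      exact absurd hab.symm (hWX b hbW a ha haW)
    · rw [piecewise_eq_of_notMem _ _ _ haW, piecewise_eq_of_notMem _ _ _ hbW] at hab
      exact hfR (hR a ha haW) (hR b hb hbW) hab
  · intro a ha
    by_cases haW : a ∈ W
    · rw [piecewise_eq_of_mem _ _ _ haW]
      exact hZS (hfWZ haW)
    · rw [piecewise_eq_of_notMem _ _ _ haW]
      exact hXS (hfRX (hR a ha haW))
  · intro e he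
    obtain ⟨u, x, y, hu, hx, hy, hxy, rfl⟩ :=
      exists_eq_triple_of_card_inter_eq_one (A.edge_card e he) (hW e he)
    have hsub := A.edge_sub _ he
    have hxA : x ∈ A.verts := hsub (by simp)
    have hyA : y ∈ A.verts := hsub (by simp)
    simp only [image_insert, image_singleton, piecewise_eq_of_mem _ _ _ hu,
      piecewise_eq_of_notMem _ _ _ hx, piecewise_eq_of_notMem _ _ _ hy]
    exact hlink _ (hfWZ hu) _ (hfRX (hR x hxA hx)) _ (hfRX (hR y hyA hy))
      fun h => hxy (hfR (hR x hxA hx) (hR y hyA hy) h)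

/-- Fix `Y ⊆ S`; every `z ∉ Y` sees a monochromatic `s`-clique in the link colouring on `Y`, and
many `z` see the same clique in the same colour. -/
theorem exists_link_clique_pair (hq : 1 ≤ q) (s : ℕ) (χ : Finset (Fin N) → Fin q)
    (S : Finset (Fin N))
    (hS : (2 * q) ^ (q * s) + s * q * ((2 * q) ^ (q * s)) ^ s ≤ S.card) :
    ∃ i, ∃ X ⊆ S, ∃ Z ⊆ S, Disjoint X Z ∧ X.card = s ∧ s ≤ Z.card ∧
      ∀ z ∈ Z, ∀ x ∈ X, ∀ y ∈ X, x ≠ y → χ {z, x, y} = i := by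
  classical
  set M := (2 * q) ^ (q * s)
  obtain ⟨Y, hYS, hYcard⟩ := exists_subset_card_eq (le_of_add_le_left hS)
  have hclique : ∀ z : Fin N, ∃ p : Fin q × Finset (Fin N), p.2 ∈ Y.powersetCard s ∧
      ∀ x ∈ p.2, ∀ y ∈ p.2, x ≠ y → χ {z, x, y} = p.1 := fun z => by
    obtain ⟨i, T, hTY, hTcard, hT⟩ :=
      exists_monochromatic_clique hq s (fun p => χ (insert z p)) Y hYcard.ge
    exact ⟨(i, T), mem_powersetCard.mpr ⟨hTY, hTcard⟩, hT⟩
  choose g hgY hg using hclique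
  have hcount : ((univ : Finset (Fin q)) ×ˢ Y.powersetCard s).card * s ≤ (S \ Y).card := by
    rw [card_product, card_univ, Fintype.card_fin, card_powersetCard, card_sdiff_of_subset hYS,
      hYcard]
    have := Nat.mul_le_mul_right s (Nat.mul_le_mul_left q (Nat.choose_le_pow M s))
    have : s * q * M ^ s = q * M ^ s * s := by ring
    omega
  obtain ⟨z₀⟩ : Nonempty (Fin N) :=
    ⟨(card_pos.mp (lt_of_lt_of_le (show 0 < M by positivity) (le_of_add_le_left hS))).choose⟩
  obtain ⟨⟨i, X⟩, hiX, hfib⟩ := exists_le_card_fiber_of_mul_le_card_of_maps_to (f := g)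
    (fun z _ => mem_product.mpr ⟨mem_univ _, hgY z⟩) ⟨g z₀, mem_product.mpr ⟨mem_univ _, hgY z₀⟩⟩
    hcount
  obtain ⟨hXY, hXcard⟩ := mem_powersetCard.mp (mem_product.mp hiX).2
  refine ⟨i, X, hXY.trans hYS, (S \ Y).filter (g · = (i, X)),
    (filter_subset _ _).trans sdiff_subset, ?_, hXcard, hfib, fun z hz => ?_⟩
  · exact disjoint_left.mpr fun x hxX hx => (mem_sdiff.mp (mem_filter.mp hx).1).2 (hXY hxX)
  · simpa only [(mem_filter.mp hz).2] using hg z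

theorem link_bound_le_pow (hq : 1 ≤ q) (s : ℕ) :
    (2 * q) ^ (q * s) + s * q * ((2 * q) ^ (q * s)) ^ s ≤ (2 * q) ^ (q * s * s + s + 2) := by
  have hb : 2 ≤ 2 * q := by omega
  have hs : s ≤ (2 * q) ^ s :=
    (Nat.lt_two_pow_self).le.trans (Nat.pow_le_pow_left hb s)
  have h1 : s * q * ((2 * q) ^ (q * s)) ^ s ≤ (2 * q) ^ (q * s * s + s + 1) :=
    calc s * q * ((2 * q) ^ (q * s)) ^ s = s * q * (2 * q) ^ (q * s * s) := by rw [← pow_mul]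
      _ ≤ (2 * q) ^ s * (2 * q) * (2 * q) ^ (q * s * s) := by gcongr; omega
      _ = (2 * q) ^ (q * s * s + s + 1) := by ring
  have h2 : (2 * q) ^ (q * s) ≤ (2 * q) ^ (q * s * s + s + 1) := by
    refine Nat.pow_le_pow_right (by omega) ?_
    rcases Nat.eq_zero_or_pos s with rfl | hs
    · simp
    · have := Nat.le_mul_of_pos_right (q * s) hs
      omega
  calc (2 * q) ^ (q * s) + s * q * ((2 * q) ^ (q * s)) ^ s
      ≤ (2 * q) ^ (q * s * s + s + 1) * 2 := by omega
    _ ≤ (2 * q) ^ (q * s * s + s + 1) * (2 * q) := Nat.mul_le_mul_left _ hb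
    _ = (2 * q) ^ (q * s * s + s + 2) := (pow_succ _ _).symm

theorem isRamseyBound_of_inU1 (hq : 1 ≤ q) {s : ℕ} {A : Fin q → ThreeGraph}
    (hA : ∀ i, InU1 (A i)) (hs : ∀ i, (A i).verts.card ≤ s) :
    IsRamseyBound A ((2 * q) ^ (q * s * s + s + 2)) := by
  intro N χ S hS
  have hSne : S.Nonempty := card_pos.mp (lt_of_lt_of_le (by positivity) hS)
  have : Nonempty (Fin N) := ⟨hSne.choose⟩
  obtain ⟨i, X, hXS, Z, hZS, hXZ, hX, hZ, hlink⟩ :=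
    exists_link_clique_pair hq s χ S ((link_bound_le_pow hq s).trans hS)
  obtain ⟨W, hWA, hW⟩ := hA i
  exact ⟨i, exists_isMonoCopy_of_crosscut hW ((card_le_card hWA).trans ((hs i).trans hZ))
    ((card_le_card sdiff_subset).trans ((hs i).trans hX.ge)) hXS hZS hXZ hlink⟩

end Crosscut

section Sunflower

open Nat in
theorem mul_pow_mul_choose_le_choose {q K R n p : ℕ} (hq : 1 ≤ q) (hK : 1 ≤ K) (hR : 1 ≤ R)
    (hn : 2 ^ (p + 1) * q * K * R ^ (p + 1) ≤ n) :
    q * n ^ p * K * R.choose (p + 1) ≤ n.choose (p + 1) := by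
  have h2p : 2 * p ≤ n := by
    have : 2 * (p + 1) ≤ 2 ^ (p + 1) := by
      rw [pow_succ']
      exact Nat.mul_le_mul_left 2 Nat.lt_two_pow_self
    have : 1 ≤ q * K * R ^ (p + 1) := Nat.one_le_iff_ne_zero.mpr (by positivity)
    have : 2 ^ (p + 1) ≤ 2 ^ (p + 1) * q * K * R ^ (p + 1) := by
      rw [mul_assoc, mul_assoc, ← mul_assoc q]; exact Nat.le_mul_of_pos_right _ this
    omega
  refine Nat.le_of_mul_le_mul_left (c := 2 ^ (p + 1) * (p + 1)!) ?_ (by positivity)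
  calc 2 ^ (p + 1) * (p + 1)! * (q * n ^ p * K * R.choose (p + 1))
      = n ^ p * (2 ^ (p + 1) * q * K * R.descFactorial (p + 1)) := by
        rw [descFactorial_eq_factorial_mul_choose]; ring
    _ ≤ n ^ p * n :=
        Nat.mul_le_mul_left _ ((Nat.mul_le_mul_left _ (descFactorial_le_pow R (p + 1))).trans hn)
    _ = n ^ (p + 1) := (pow_succ n p).symm
    _ ≤ (2 * (n + 1 - (p + 1))) ^ (p + 1) := Nat.pow_le_pow_left (by omega) _
    _ = 2 ^ (p + 1) * (n + 1 - (p + 1)) ^ (p + 1) := mul_pow _ _ _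
    _ ≤ 2 ^ (p + 1) * n.descFactorial (p + 1) :=
        Nat.mul_le_mul_left _ (pow_sub_le_descFactorial n (p + 1))
    _ = 2 ^ (p + 1) * (p + 1)! * n.choose (p + 1) := by
        rw [descFactorial_eq_factorial_mul_choose]; ring

theorem eq_update_of_removeNth_eq {α : Type*} {p : ℕ} {f g : Fin (p + 1) → α} {k : Fin (p + 1)}
    (h : Fin.removeNth k f = Fin.removeNth k g) : f = Function.update g k (f k) :=
  calc f = Fin.insertNth k (f k) (Fin.removeNth k f) := (Fin.insertNth_self_removeNth _ _).symm
    _ = Function.update (Fin.insertNth k (g k) (Fin.removeNth k g)) k (f k) := by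
      rw [Fin.update_insertNth, h]
    _ = Function.update g k (f k) := by rw [Fin.insertNth_self_removeNth]

variable {α : Type*} [DecidableEq α]

theorem choose_le_card_mul_choose {S : Finset α} {𝒜 : Finset (Finset α)} {p R : ℕ}
    (h𝒜 : ∀ P ∈ 𝒜, P ⊆ S ∧ P.card = p) (hpR : p ≤ R) (hRS : R ≤ S.card)
    (hcover : ∀ T ∈ S.powersetCard R, ∃ P ∈ 𝒜, P ⊆ T) :
    S.card.choose p ≤ 𝒜.card * R.choose p := by
  have hsub : S.powersetCard R ⊆ 𝒜.biUnion fun P => (S.powersetCard R).filter (P ⊆ ·) := by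
    intro T hT
    obtain ⟨P, hP, hPT⟩ := hcover T hT
    exact mem_biUnion.mpr ⟨P, hP, mem_filter.mpr ⟨hT, hPT⟩⟩
  have hcount : S.card.choose R ≤ 𝒜.card * (S.card - p).choose (R - p) := by
    rw [← card_powersetCard]
    refine (card_le_card hsub).trans (card_biUnion_le_card_mul _ _ _ fun P hP => ?_)
    obtain ⟨hPS, hPcard⟩ := h𝒜 P hP
    rw [card_filter_powersetCard_subset P S R hPS (hPcard ▸ hpR), hPcard]
  refine Nat.le_of_mul_le_mul_right ?_ (Nat.choose_pos (Nat.sub_le_sub_right hRS p))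
  calc S.card.choose p * (S.card - p).choose (R - p) = S.card.choose R * R.choose p :=
        (Nat.choose_mul hpR).symm
    _ ≤ 𝒜.card * (S.card - p).choose (R - p) * R.choose p := Nat.mul_le_mul_right _ hcount
    _ = 𝒜.card * R.choose p * (S.card - p).choose (R - p) := by ring

open Classical in
noncomputable def injectiveTuples {ι : Type*} [Fintype ι] (S : Finset α) (p : ℕ)
    (Q : ι → (Fin p → α) → Prop) : Finset (ι × (Fin p → α)) :=
  ((univ : Finset ι) ×ˢ Fintype.piFinset fun _ : Fin p => S).filter
    fun d => Function.Injective d.2 ∧ Q d.1 d.2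

variable {ι : Type*} [Fintype ι] {S : Finset α} {p R : ℕ} {Q : ι → (Fin p → α) → Prop}

theorem mem_injectiveTuples {d : ι × (Fin p → α)} :
    d ∈ injectiveTuples S p Q ↔ (∀ j, d.2 j ∈ S) ∧ Function.Injective d.2 ∧ Q d.1 d.2 := by
  simp [injectiveTuples]

theorem choose_le_card_injectiveTuples_mul_choose (hpR : p ≤ R) (hRS : R ≤ S.card)
    (hcover : ∀ T ∈ S.powersetCard R, ∃ i e, Function.Injective e ∧ (∀ j, e j ∈ T) ∧ Q i e) :
    S.card.choose p ≤ (injectiveTuples S p Q).card * R.choose p := by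
  refine (choose_le_card_mul_choose
    (𝒜 := (injectiveTuples S p Q).image fun d => univ.image d.2) ?_ hpR hRS ?_).trans
    (Nat.mul_le_mul_right _ card_image_le)
  · intro P hP
    obtain ⟨d, hd, rfl⟩ := mem_image.mp hP
    obtain ⟨hdS, hdinj, -⟩ := mem_injectiveTuples.mp hd
    refine ⟨fun x hx => ?_, by rw [card_image_of_injective _ hdinj, card_univ, Fintype.card_fin]⟩
    obtain ⟨j, -, rfl⟩ := mem_image.mp hx
    exact hdS j
  · intro T hT
    obtain ⟨i, e, he, heT, hQ⟩ := hcover T hT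
    have hTS := (mem_powersetCard.mp hT).1
    refine ⟨univ.image e, mem_image.mpr ⟨(i, e), mem_injectiveTuples.mpr
      ⟨fun j => hTS (heT j), he, hQ⟩, rfl⟩, fun x hx => ?_⟩
    obtain ⟨j, -, rfl⟩ := mem_image.mp hx
    exact heT j

/-- Pigeonholing the tuples on their label and on the coordinates other than `k i` leaves
`K` of them that differ only at `k i`. -/
theorem exists_sunflower {K : ℕ} {Q : ι → (Fin (p + 1) → α) → Prop} (k : ι → Fin (p + 1))
    (hpR : p + 1 ≤ R) (hRS : R ≤ S.card) (hK : 1 ≤ K)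
    (hcount : Fintype.card ι * S.card ^ p * K * R.choose (p + 1) ≤ S.card.choose (p + 1))
    (hcover : ∀ T ∈ S.powersetCard R, ∃ i e, Function.Injective e ∧ (∀ j, e j ∈ T) ∧ Q i e) :
    ∃ i e₀, ∃ B ⊆ S, K ≤ B.card ∧ ∀ b ∈ B, Q i (Function.update e₀ (k i) b) := by
  classical
  set D := injectiveTuples S (p + 1) Q
  have hDcard := choose_le_card_injectiveTuples_mul_choose hpR hRS hcover
  set C := (univ : Finset ι) ×ˢ Fintype.piFinset fun _ : Fin p => S
  have hmaps : ∀ d ∈ D, (d.1, Fin.removeNth (k d.1) d.2) ∈ C := fun d hd =>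
    mem_product.mpr ⟨mem_univ _, Fintype.mem_piFinset.mpr fun j =>
      (mem_injectiveTuples.mp hd).1 _⟩
  have hCK : C.card * K ≤ D.card := by
    refine Nat.le_of_mul_le_mul_right ?_ (Nat.choose_pos hpR)
    calc C.card * K * R.choose (p + 1) = Fintype.card ι * S.card ^ p * K * R.choose (p + 1) := by
          simp [C]
      _ ≤ D.card * R.choose (p + 1) := hcount.trans hDcard
  obtain ⟨d₀, hd₀⟩ : D.Nonempty := card_pos.mp <| Nat.pos_of_ne_zero fun h => by
    have := Nat.choose_pos (hpR.trans hRS)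
    rw [h, zero_mul] at hDcard
    omega
  obtain ⟨⟨i, e⟩, -, hfib⟩ :=
    exists_le_card_fiber_of_mul_le_card_of_maps_to hmaps ⟨_, hmaps d₀ hd₀⟩ hCK
  set F := D.filter fun d => (d.1, Fin.removeNth (k d.1) d.2) = (i, e)
  have hF : ∀ d ∈ F, d ∈ D ∧ d.1 = i ∧ Fin.removeNth (k i) d.2 = e := fun d hd => by
    obtain ⟨hdD, hdi, hde⟩ : d ∈ D ∧ d.1 = i ∧ Fin.removeNth (k d.1) d.2 = e := by
      simpa only [F, mem_filter, Prod.mk.injEq] using hd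
    exact ⟨hdD, hdi, hdi ▸ hde⟩
  obtain ⟨d₁, hd₁⟩ : F.Nonempty := card_pos.mp (by omega)
  have hupdate : ∀ d ∈ F, d.2 = Function.update d₁.2 (k i) (d.2 (k i)) := fun d hd =>
    eq_update_of_removeNth_eq ((hF d hd).2.2.trans (hF d₁ hd₁).2.2.symm)
  refine ⟨i, d₁.2, F.image fun d => d.2 (k i), fun b hb => ?_, ?_, fun b hb => ?_⟩
  · obtain ⟨d, hd, rfl⟩ := mem_image.mp hb
    exact (mem_injectiveTuples.mp (hF d hd).1).1 _
  · refine hfib.trans (card_image_of_injOn fun d hd d' hd' hdd' => ?_).ge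
    refine Prod.ext ((hF d hd).2.1.trans (hF d' hd').2.1.symm) ?_
    rw [hupdate d hd, hupdate d' hd', show d.2 (k i) = d'.2 (k i) from hdd']
  · obtain ⟨d, hd, rfl⟩ := mem_image.mp hb
    obtain ⟨hdD, rfl, -⟩ := hF d hd
    rw [← hupdate d hd]
    exact (mem_injectiveTuples.mp hdD).2.2

end Sunflower

section Reduction

variable {N q : ℕ}

/-- The position of `a` in the increasing enumeration of `V`, reduced mod `s + 1`, which is
harmless as long as `V.card ≤ s + 1`. -/
def vertexIndex (s : ℕ) (V : Finset ℕ) (a : ℕ) : Fin (s + 1) :=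
  Fin.ofNat (s + 1) ((V.sort (· ≤ ·)).idxOf a)

theorem vertexIndex_injOn {s : ℕ} {V : Finset ℕ} (hV : V.card ≤ s + 1) :
    Set.InjOn (vertexIndex s V) V := by
  intro a ha b hb hab
  have hlt : ∀ x ∈ V, (V.sort (· ≤ ·)).idxOf x < s + 1 := fun x hx =>
    (List.idxOf_lt_length_iff.mpr ((mem_sort _).mpr hx)).trans_le (by rwa [length_sort])
  have := congrArg Fin.val hab
  simp only [vertexIndex, Fin.val_ofNat, Nat.mod_eq_of_lt (hlt a ha),
    Nat.mod_eq_of_lt (hlt b hb)] at this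
  exact (List.idxOf_inj ((mem_sort _).mpr ha)).mp this

theorem exists_injective_tuple {s : ℕ} {V : Finset ℕ} (hV : V.card ≤ s + 1)
    {T : Finset (Fin N)} (hT : s + 1 ≤ T.card) {f : ℕ → Fin N} (hf : Set.InjOn f V)
    (hfT : Set.MapsTo f V T) :
    ∃ e : Fin (s + 1) → Fin N, Function.Injective e ∧ (∀ j, e j ∈ T) ∧
      Set.EqOn (e ∘ vertexIndex s V) f V := by
  classical
  set f' := f ∘ Function.invFunOn (vertexIndex s V) V
  have hf' : ∀ a ∈ V, f' (vertexIndex s V a) = f a := fun a ha =>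
    congrArg f ((vertexIndex_injOn hV).leftInvOn_invFunOn ha)
  obtain ⟨t, hft, htT, htcard⟩ := exists_subsuperset_card_eq (s := V.image f)
    (image_subset_iff.mpr hfT) (card_image_le.trans hV) hT
  have himage : (V.image (vertexIndex s V)).image f' ⊆ t := by
    intro x hx
    obtain ⟨j, hj, rfl⟩ := mem_image.mp hx
    obtain ⟨a, ha, rfl⟩ := mem_image.mp hj
    rw [hf' a ha]
    exact hft (mem_image_of_mem f ha)
  have hinj : Set.InjOn f' (V.image (vertexIndex s V)) := by
    rintro _ hj _ hj' hjj'
    obtain ⟨a, ha, rfl⟩ := mem_image.mp hj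
    obtain ⟨a', ha', rfl⟩ := mem_image.mp hj'
    rw [hf' a ha, hf' a' ha'] at hjj'
    rw [hf ha ha' hjj']
  obtain ⟨g, hg⟩ := exists_equiv_extend_of_card_eq (α := Fin (s + 1)) (by simp [htcard]) himage hinj
  refine ⟨fun j => g j, Subtype.val_injective.comp g.injective, fun j => htT (g j).2,
    fun a ha => ?_⟩
  simp only [Function.comp_apply]
  rw [hg _ (mem_image_of_mem _ ha), hf' a ha]

/-- `Reducible G H F` with the collapsed set `U` and the new vertex `v` made explicit. -/
structure ReducesVia (G H F : ThreeGraph) (U : Finset ℕ) (v : ℕ) : Prop where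
  subset : U ⊆ G.verts
  two_le_card : 2 ≤ U.card
  card_lt : U.card < G.verts.card
  collapsible : ∀ e ∈ G.edges, (e ∩ U).card ≠ 2
  notMem : v ∉ G.verts
  H_verts : H.verts = (G.verts \ U) ∪ {v}
  H_edges : H.edges = G.edges.filter (fun e => e ∩ U = ∅) ∪
    (G.edges.filter (fun e => (e ∩ U).card = 1)).image (fun e => (e \ U) ∪ {v})
  F_verts : F.verts = U
  F_edges : F.edges = G.edges.filter (fun e => e ⊆ U)

theorem Reducible.exists_reducesVia {G H F : ThreeGraph} (h : Reducible G H F) :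
    ∃ U v, ReducesVia G H F U v := by
  obtain ⟨U, v, h1, h2, h3, h4, h5, h6, h7, h8, h9⟩ := h
  exact ⟨U, v, h1, h2, h3, h4, h5, h6, h7, h8, h9⟩

namespace ReducesVia

variable {G H F : ThreeGraph} {U : Finset ℕ} {v : ℕ}

theorem mem_H_verts (hr : ReducesVia G H F U v) {a : ℕ} (ha : a ∈ G.verts) (haU : a ∉ U) :
    a ∈ H.verts := by
  rw [hr.H_verts]
  exact mem_union_left _ (mem_sdiff.mpr ⟨ha, haU⟩)

theorem v_mem_H_verts (hr : ReducesVia G H F U v) : v ∈ H.verts := by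
  rw [hr.H_verts]
  exact mem_union_right _ (mem_singleton_self v)

theorem card_H_verts_lt (hr : ReducesVia G H F U v) : H.verts.card < G.verts.card := by
  rw [hr.H_verts]
  have := card_union_le (G.verts \ U) {v}
  have := card_sdiff_of_subset hr.subset
  have := hr.two_le_card
  have := hr.card_lt
  simp only [card_singleton] at *
  omega

theorem card_F_verts_lt (hr : ReducesVia G H F U v) : F.verts.card < G.verts.card :=
  hr.F_verts ▸ hr.card_lt

theorem image_eq_image_of_inter_eq_singleton {β : Type*} [DecidableEq β] {e : Finset ℕ}
    {u : ℕ} {f g : ℕ → β} (hu : e ∩ U = {u}) (hfg : ∀ a ∈ e \ U, f a = g a) (huv : f u = g v) :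
    e.image f = ((e \ U) ∪ {v}).image g := by
  conv_lhs => rw [← sdiff_union_inter e U, hu]
  rw [image_union, image_union, image_congr hfg, image_singleton, image_singleton, huv]

theorem ne_of_mem (hr : ReducesVia G H F U v) {a : ℕ} (ha : a ∈ G.verts) : a ≠ v :=
  fun h => hr.notMem (h ▸ ha)

theorem nonempty (hr : ReducesVia G H F U v) : U.Nonempty :=
  card_pos.mp (by have := hr.two_le_card; omega)

theorem injOn_piecewise (hr : ReducesVia G H F U v) {β : Type*} {B : Set β} {g fF : ℕ → β}
    (hH : ∀ b ∈ B, Set.InjOn (Function.update g v b) H.verts) (hF : Set.InjOn fF F.verts)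
    (hUB : Set.MapsTo fF U B) : Set.InjOn (U.piecewise fF g) G.verts := by
  classical
  have hg : ∀ b, ∀ a ∈ G.verts, Function.update g v b a = g a := fun b a ha =>
    Function.update_of_ne (hr.ne_of_mem ha) _ _
  have hUF : ∀ {a}, a ∈ U → a ∈ (F.verts : Set ℕ) := fun ha => by rw [hr.F_verts]; exact ha
  intro a ha b hb hab
  by_cases haU : a ∈ U <;> by_cases hbU : b ∈ U
  · rw [piecewise_eq_of_mem _ _ _ haU, piecewise_eq_of_mem _ _ _ hbU] at hab
    exact hF (hUF haU) (hUF hbU) hab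
  · rw [piecewise_eq_of_mem _ _ _ haU, piecewise_eq_of_notMem _ _ _ hbU] at hab
    refine absurd (hH _ (hUB haU) hr.v_mem_H_verts (hr.mem_H_verts hb hbU) ?_).symm
      (hr.ne_of_mem hb)
    rw [Function.update_self, hg _ b hb, hab]
  · rw [piecewise_eq_of_notMem _ _ _ haU, piecewise_eq_of_mem _ _ _ hbU] at hab
    refine absurd (hH _ (hUB hbU) hr.v_mem_H_verts (hr.mem_H_verts ha haU) ?_).symm
      (hr.ne_of_mem ha)
    rw [Function.update_self, hg _ a ha, hab]
  · rw [piecewise_eq_of_notMem _ _ _ haU, piecewise_eq_of_notMem _ _ _ hbU] at hab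
    obtain ⟨u₀, hu₀⟩ := hr.nonempty
    exact hH _ (hUB hu₀) (hr.mem_H_verts ha haU) (hr.mem_H_verts hb hbU)
      (by rwa [hg _ a ha, hg _ b hb])

/-- An edge of `G` meeting `U` in a single vertex `u` is the image of an edge of `H` through `v`,
coloured by the copy of `H` that sends `v` to `fF u`. -/
theorem color_piecewise (hr : ReducesVia G H F U v) {β γ : Type*} [DecidableEq β]
    {χ : Finset β → γ} {i : γ} {B : Set β} {g fF : ℕ → β}
    (hH : ∀ b ∈ B, ∀ e ∈ H.edges, χ (e.image (Function.update g v b)) = i)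
    (hF : ∀ e ∈ F.edges, χ (e.image fF) = i) (hUB : Set.MapsTo fF U B) :
    ∀ e ∈ G.edges, χ (e.image (U.piecewise fF g)) = i := by
  classical
  intro e he
  have heG := G.edge_sub e he
  have hg : ∀ b, ∀ a ∈ e, a ∉ U → U.piecewise fF g a = Function.update g v b a :=
    fun b a ha haU => by
      rw [piecewise_eq_of_notMem _ _ _ haU, Function.update_of_ne (hr.ne_of_mem (heG ha))]
  have hcard : (e ∩ U).card ≤ 3 := G.edge_card e he ▸ card_le_card inter_subset_left
  have := hr.collapsible e he
  obtain h0 | h1 | h3 : (e ∩ U).card = 0 ∨ (e ∩ U).card = 1 ∨ (e ∩ U).card = 3 := by omega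
  · have hempty := card_eq_zero.mp h0
    obtain ⟨u₀, hu₀⟩ := hr.nonempty
    rw [image_congr fun a ha => hg (fF u₀) a ha fun haU =>
      notMem_empty a (hempty ▸ mem_inter.mpr ⟨ha, haU⟩)]
    exact hH _ (hUB hu₀) e (hr.H_edges ▸ mem_union_left _ (mem_filter.mpr ⟨he, hempty⟩))
  · obtain ⟨u, hu⟩ := card_eq_one.mp h1
    have huU : u ∈ U := (mem_inter.mp (hu ▸ mem_singleton_self u)).2
    rw [image_eq_image_of_inter_eq_singleton hu (g := Function.update g v (fF u))
      (fun a ha => hg _ a (mem_sdiff.mp ha).1 (mem_sdiff.mp ha).2)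
      (by rw [piecewise_eq_of_mem _ _ _ huU, Function.update_self])]
    exact hH _ (hUB huU) _ (hr.H_edges ▸ mem_union_right _
      (mem_image_of_mem _ (mem_filter.mpr ⟨he, h1⟩)))
  · have heU : e ⊆ U := inter_eq_left.mp
      (eq_of_subset_of_card_le inter_subset_left (by rw [h3, G.edge_card e he]))
    rw [image_congr (g := fF) fun a ha => piecewise_eq_of_mem _ _ _ (heU ha)]
    exact hF e (hr.F_edges ▸ mem_filter.mpr ⟨he, heU⟩)

theorem isMonoCopy_piecewise (hr : ReducesVia G H F U v) {χ : Finset (Fin N) → Fin q}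
    {S B : Finset (Fin N)} {i : Fin q} {g fF : ℕ → Fin N} (hBS : B ⊆ S)
    (hH : ∀ b ∈ B, IsMonoCopy χ S i H (Function.update g v b)) (hF : IsMonoCopy χ B i F fF) :
    IsMonoCopy χ S i G (U.piecewise fF g) := by
  have hUB : Set.MapsTo fF U B := fun u hu => hF.mapsTo (by rw [hr.F_verts]; exact hu)
  refine ⟨hr.injOn_piecewise (fun b hb => (hH b hb).injOn) hF.injOn hUB, fun a ha => ?_,
    hr.color_piecewise (fun b hb => (hH b hb).color) hF.color hUB⟩
  by_cases haU : a ∈ U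
  · rw [piecewise_eq_of_mem _ _ _ haU]
    exact hBS (hUB haU)
  · obtain ⟨u₀, hu₀⟩ := hr.nonempty
    rw [piecewise_eq_of_notMem _ _ _ haU,
      ← Function.update_of_ne (hr.ne_of_mem ha) (fF u₀) g]
    exact (hH _ (hUB hu₀)).mapsTo (hr.mem_H_verts ha haU)

end ReducesVia

end Reduction

theorem MemU.mono_le {i j : ℕ} {G : ThreeGraph} (h : MemU i G) (hij : i ≤ j) : MemU j G := by
  induction j, hij using Nat.le_induction with
  | base => exact h
  | succ j _ ih => exact MemU.mono j G ih

theorem Tripartite.inU1 {G : ThreeGraph} (h : Tripartite G) : InU1 G := by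
  obtain ⟨V1, V2, V3, -, -, -, hunion, hedge⟩ := h
  exact ⟨V1, hunion ▸ subset_union_left.trans subset_union_left, fun e he => (hedge e he).1⟩

theorem MemU.inU1_or_reducesVia {L : ℕ} {G : ThreeGraph} (h : MemU L G) :
    InU1 G ∨ 2 ≤ L ∧ ∃ H F U v, ReducesVia G H F U v ∧ MemU (L - 1) H ∧ MemU L F := by
  induction h with
  | zero G hG => exact Or.inl hG.inU1
  | one G hG => exact Or.inl hG
  | mono i G _ ih =>
    rcases ih with hG | ⟨hi, H, F, U, v, hr, hH, hF⟩
    · exact Or.inl hG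
    · exact Or.inr ⟨by omega, H, F, U, v, hr, hH.mono_le (by omega), hF.mono i F⟩
  | reduce i G H F hR hH hF =>
    obtain ⟨U, v, hr⟩ := hR.exists_reducesVia
    exact Or.inr ⟨by omega, H, F, U, v, hr, hH, hF⟩

section Exponent

variable {s q L m : ℕ}

/-- Chosen so that `ramseyExponent_succ_succ_le` holds; for `m = q * (s + 1)` it is
`O(q ^ L)`. -/
def ramseyExponent (s q L m : ℕ) : ℕ := q ^ (L - 1) * (s + 3) ^ (3 * L) * (m + 2)

theorem ramseyExponent_mono (hq : 1 ≤ q) {L' m' : ℕ} (hL : L ≤ L') (hm : m ≤ m') :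
    ramseyExponent s q L m ≤ ramseyExponent s q L' m' := by
  unfold ramseyExponent
  gcongr
  omega

theorem le_ramseyExponent (hq : 1 ≤ q) (hL : 1 ≤ L) : s + 3 ≤ ramseyExponent s q L m :=
  calc s + 3 ≤ 1 * (s + 3) ^ (3 * L) * 1 := by simpa using Nat.le_self_pow (by omega) (s + 3)
    _ ≤ ramseyExponent s q L m :=
        Nat.mul_le_mul (Nat.mul_le_mul (Nat.one_le_pow _ _ hq) le_rfl) (by omega)

theorem base_le_ramseyExponent (hq : 1 ≤ q) (hL : 1 ≤ L) (hm : q ≤ m) :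
    q * s * s + s + 2 ≤ ramseyExponent s q L m :=
  calc q * s * s + s + 2 ≤ (s + 3) ^ 3 * (q + 2) := by
        ring_nf
        nlinarith [Nat.zero_le (q * s ^ 3), Nat.zero_le (q * s), Nat.zero_le (s ^ 3),
          Nat.zero_le (s ^ 2)]
    _ = ramseyExponent s q 1 q := by simp [ramseyExponent]
    _ ≤ ramseyExponent s q L m := ramseyExponent_mono hq hL hm

theorem ramseyExponent_succ_succ_le (hq : 1 ≤ q) (hL : 1 ≤ L) :
    ramseyExponent s q (L + 1) m + 1 + (s + 2) * ramseyExponent s q L (q * (s + 1)) ≤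
      ramseyExponent s q (L + 1) (m + 1) := by
  obtain ⟨L, rfl⟩ := Nat.exists_eq_add_of_le' hL
  set X := q ^ L * (s + 3) ^ (3 * (L + 1))
  have hX : 1 ≤ X := Nat.one_le_iff_ne_zero.mpr (by positivity)
  have hpoly : (s + 2) * (q * (s + 1) + 2) + 1 ≤ q * (s + 3) ^ 3 := by
    ring_nf
    nlinarith [Nat.zero_le (q * s ^ 3), Nat.zero_le (q * s ^ 2), Nat.le_mul_of_pos_left s hq]
  have e1 : ∀ m, ramseyExponent s q (L + 1 + 1) m = X * (q * (s + 3) ^ 3) * (m + 2) := fun m => by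
    simp only [ramseyExponent, X, Nat.add_sub_cancel]; ring
  have e2 : ramseyExponent s q (L + 1) (q * (s + 1)) = X * (q * (s + 1) + 2) := by
    simp only [ramseyExponent, X, Nat.add_sub_cancel]
  rw [e1, e1, e2]
  nlinarith

theorem ramseyExponent_le (hq : 1 ≤ q) (hL : 1 ≤ L) :
    ramseyExponent s q L (q * (s + 1)) ≤ (s + 3) ^ (3 * L + 1) * q ^ L := by
  obtain ⟨L, rfl⟩ := Nat.exists_eq_add_of_le' hL
  simp only [ramseyExponent, Nat.add_sub_cancel]
  calc q ^ L * (s + 3) ^ (3 * (L + 1)) * (q * (s + 1) + 2)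
      ≤ q ^ L * (s + 3) ^ (3 * (L + 1)) * (q * (s + 3)) := by gcongr; nlinarith
    _ = (s + 3) ^ (3 * (L + 1) + 1) * q ^ (L + 1) := by ring

theorem two_pow_mul_le_pow (hq : 1 ≤ q) {a b c : ℕ} (hb : s + 1 ≤ b)
    (habc : a + 1 + (s + 2) * b ≤ c) :
    2 ^ (s + 1) * q * (2 * q) ^ a * ((2 * q) ^ b) ^ (s + 1) ≤ (2 * q) ^ c :=
  calc 2 ^ (s + 1) * q * (2 * q) ^ a * ((2 * q) ^ b) ^ (s + 1)
      ≤ (2 * q) ^ (s + 1) * (2 * q) * (2 * q) ^ a * ((2 * q) ^ b) ^ (s + 1) := by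
        gcongr <;> omega
    _ = (2 * q) ^ (s + 2 + a + b * (s + 1)) := by ring
    _ ≤ (2 * q) ^ c := Nat.pow_le_pow_right (by omega) (by nlinarith)

end Exponent

section Induction

variable {N q : ℕ}

/-- Either a slot with `A i = H i` is found directly, or every `R`-subset of `S` contains a copy
of some `H i` with `A i` reducible to `(H i, F i)`. A sunflower of such copies, differing only
at the new vertex `v i`, sends `v i` to every point of a set `B` of size `K`, and a copy of
`F i` inside `B` glues with it into a copy of `A i`. -/
theorem exists_isMonoCopy_of_reducesVia (hq : 1 ≤ q) {s R K : ℕ}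
    {A H F : Fin q → ThreeGraph} {U : Fin q → Finset ℕ} {v : Fin q → ℕ}
    (hslot : ∀ i, A i = H i ∨ ReducesVia (A i) (H i) (F i) (U i) (v i))
    (hHs : ∀ i, (H i).verts.card ≤ s + 1) (hH : IsRamseyBound H R)
    (hF : ∀ i, ReducesVia (A i) (H i) (F i) (U i) (v i) →
      IsRamseyBound (Function.update A i (F i)) K)
    (hR : s + 1 ≤ R) (hK : 1 ≤ K) (χ : Finset (Fin N) → Fin q) (S : Finset (Fin N))
    (hS : 2 ^ (s + 1) * q * K * R ^ (s + 1) ≤ S.card) :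
    ∃ i f, IsMonoCopy χ S i (A i) f := by
  classical
  by_cases hdirect : ∃ i f, A i = H i ∧ IsMonoCopy χ S i (H i) f
  · obtain ⟨i, f, hAH, hf⟩ := hdirect
    exact ⟨i, f, hAH ▸ hf⟩
  simp only [not_exists, not_and] at hdirect
  set Q : Fin q → (Fin (s + 1) → Fin N) → Prop := fun i e =>
    ReducesVia (A i) (H i) (F i) (U i) (v i) ∧
      IsMonoCopy χ S i (H i) (e ∘ vertexIndex s (H i).verts)
  have hcover : ∀ T ∈ S.powersetCard R, ∃ i e,
      Function.Injective e ∧ (∀ j, e j ∈ T) ∧ Q i e := by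
    intro T hT
    obtain ⟨hTS, hTcard⟩ := mem_powersetCard.mp hT
    obtain ⟨i, f, hf⟩ := hH χ T hTcard.ge
    have hr := (hslot i).resolve_left fun hAH => hdirect i f hAH (hf.mono hTS)
    obtain ⟨e, he, heT, hef⟩ := exists_injective_tuple (hHs i) (hTcard ▸ hR) hf.injOn hf.mapsTo
    exact ⟨i, e, he, heT, hr, (hf.congr hef.symm).mono hTS⟩
  have hRS : R ≤ S.card := by
    refine le_trans ?_ hS
    calc R ≤ R ^ (s + 1) := Nat.le_self_pow (by omega) R
      _ ≤ 2 ^ (s + 1) * q * K * R ^ (s + 1) :=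
        Nat.le_mul_of_pos_left _ (by positivity)
  obtain ⟨i, e₀, B, hBS, hKB, hB⟩ := exists_sunflower (Q := Q)
    (fun i => vertexIndex s (H i).verts (v i)) hR hRS hK
    (by simpa using mul_pow_mul_choose_le_choose hq hK (by omega) hS) hcover
  obtain ⟨b₀, hb₀⟩ : B.Nonempty := card_pos.mp (by omega)
  have hr := (hB b₀ hb₀).1
  obtain ⟨j, fF, hfF⟩ := hF i hr χ B hKB
  rcases eq_or_ne j i with rfl | hji
  · rw [Function.update_self] at hfF
    refine ⟨j, _, hr.isMonoCopy_piecewise hBS (g := e₀ ∘ vertexIndex s (H j).verts)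
      (fun b hb => (hB b hb).2.congr fun a ha => ?_) hfF⟩
    rcases eq_or_ne a (v j) with rfl | hav
    · simp
    · have := fun h => hav (vertexIndex_injOn (hHs j) ha hr.v_mem_H_verts h)
      simp only [Function.comp_apply, Function.update_of_ne hav, Function.update_of_ne this]
  · rw [Function.update_of_ne hji] at hfF
    exact ⟨j, fF, hfF.mono hBS⟩

theorem le_sum_card_add_one (A : Fin q → ThreeGraph) : q ≤ ∑ i, ((A i).verts.card + 1) :=
  calc q = ∑ _i : Fin q, 1 := by simp
    _ ≤ ∑ i, ((A i).verts.card + 1) := sum_le_sum fun _ _ => by omega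

def RamseyBoundAt (s q L m : ℕ) : Prop :=
  ∀ A : Fin q → ThreeGraph, (∀ i, MemU L (A i)) → (∀ i, (A i).verts.card ≤ s) →
    ∑ i, ((A i).verts.card + 1) ≤ m → IsRamseyBound A ((2 * q) ^ ramseyExponent s q L m)

variable {s : ℕ}

theorem ramseyBoundAt_one (hq : 1 ≤ q) (m : ℕ) : RamseyBoundAt s q 1 m := by
  intro A hA hs hm
  refine (isRamseyBound_of_inU1 hq (fun i => ?_) hs).mono (Nat.pow_le_pow_right (by omega)
    (base_le_ramseyExponent hq le_rfl ((le_sum_card_add_one A).trans hm)))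
  rcases (hA i).inU1_or_reducesVia with h | ⟨h, -⟩
  · exact h
  · omega

theorem RamseyBoundAt.update {L m : ℕ} (h : RamseyBoundAt s q L m) {A : Fin q → ThreeGraph}
    (hA : ∀ j, MemU L (A j)) (hs : ∀ j, (A j).verts.card ≤ s)
    (hm : ∑ j, ((A j).verts.card + 1) ≤ m + 1) {i : Fin q} {F : ThreeGraph} (hF : MemU L F)
    (hlt : F.verts.card < (A i).verts.card) :
    IsRamseyBound (Function.update A i F) ((2 * q) ^ ramseyExponent s q L m) := by
  refine h _ (fun j => ?_) (fun j => ?_) ?_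
  · rcases eq_or_ne j i with rfl | h
    · simpa using hF
    · simpa [Function.update_of_ne h] using hA j
  · rcases eq_or_ne j i with rfl | h
    · simpa using hlt.le.trans (hs j)
    · simpa [Function.update_of_ne h] using hs j
  · have : ∑ j, ((Function.update A i F j).verts.card + 1) < ∑ j, ((A j).verts.card + 1) := by
      refine sum_lt_sum (fun j _ => ?_) ⟨i, mem_univ i, by simpa using hlt⟩
      rcases eq_or_ne j i with rfl | h
      · simpa using hlt.le
      · simp [Function.update_of_ne h]
    omega

theorem ramseyBoundAt_succ (hq : 1 ≤ q) {L m : ℕ} (hL : 1 ≤ L)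
    (hlow : ∀ m, RamseyBoundAt s q L m) (hprev : RamseyBoundAt s q (L + 1) m) :
    RamseyBoundAt s q (L + 1) (m + 1) := by
  intro A hA hs hm
  have hslot : ∀ i, ∃ H F U v, (A i = H ∧ InU1 (A i)) ∨
      (ReducesVia (A i) H F U v ∧ MemU L H ∧ MemU (L + 1) F) := fun i => by
    rcases (hA i).inU1_or_reducesVia with h | ⟨-, H, F, U, v, hr, hH, hF⟩
    · exact ⟨A i, A i, ∅, 0, Or.inl ⟨rfl, h⟩⟩
    · exact ⟨H, F, U, v, Or.inr ⟨hr, hH, hF⟩⟩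
  choose H F U v hslot using hslot
  have hHs : ∀ i, (H i).verts.card ≤ s := fun i => by
    rcases hslot i with ⟨hAH, -⟩ | ⟨hr, -⟩
    · exact hAH ▸ hs i
    · exact hr.card_H_verts_lt.le.trans (hs i)
  have hH : IsRamseyBound H ((2 * q) ^ ramseyExponent s q L (q * (s + 1))) := by
    refine hlow _ H (fun i => ?_) hHs ?_
    · rcases hslot i with ⟨hAH, h⟩ | ⟨-, h, -⟩
      · exact hAH ▸ (MemU.one _ h).mono_le hL
      · exact h
    · calc ∑ i, ((H i).verts.card + 1) ≤ ∑ _i : Fin q, (s + 1) :=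
            sum_le_sum fun i _ => by have := hHs i; omega
        _ = q * (s + 1) := by simp
  have hF : ∀ i, ReducesVia (A i) (H i) (F i) (U i) (v i) →
      IsRamseyBound (Function.update A i (F i))
        ((2 * q) ^ ramseyExponent s q (L + 1) m) := fun i hr => by
    refine hprev.update hA hs hm ?_ hr.card_F_verts_lt
    rcases hslot i with ⟨hAH, -⟩ | ⟨-, -, h⟩
    · exact absurd hr.card_H_verts_lt (by rw [hAH]; exact lt_irrefl _)
    · exact h
  have hR := le_ramseyExponent (s := s) (m := q * (s + 1)) hq hL
  refine fun N χ S hS => exists_isMonoCopy_of_reducesVia hq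
    (fun i => (hslot i).imp (fun h => h.1) (fun h => h.1))
    (fun i => (hHs i).trans (Nat.le_succ s)) hH hF ?_ (Nat.one_le_pow _ _ (by omega)) χ S
    ((two_pow_mul_le_pow hq (by omega) (ramseyExponent_succ_succ_le hq hL)).trans hS)
  calc s + 1 ≤ ramseyExponent s q L (q * (s + 1)) := by omega
    _ ≤ 2 ^ ramseyExponent s q L (q * (s + 1)) := Nat.lt_two_pow_self.le
    _ ≤ (2 * q) ^ ramseyExponent s q L (q * (s + 1)) := Nat.pow_le_pow_left (by omega) _

theorem ramseyBoundAt (hq : 1 ≤ q) {L : ℕ} (hL : 1 ≤ L) (m : ℕ) : RamseyBoundAt s q L m := by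
  induction L, hL using Nat.le_induction generalizing m with
  | base => exact ramseyBoundAt_one hq m
  | succ L hL ih =>
    induction m with
    | zero =>
      intro A _ _ hm
      have := le_sum_card_add_one A
      omega
    | succ m ihm => exact ramseyBoundAt_succ hq hL ih ihm

end Induction

theorem pow_eq_two_rpow {x : ℝ} (hx : 0 < x) (n : ℕ) :
    x ^ n = (2 : ℝ) ^ (n * Real.log x / Real.log 2) := by
  rw [Real.rpow_def_of_pos two_pos, mul_div_cancel₀ _ (Real.log_pos one_lt_two).ne',
    ← Real.log_pow, Real.exp_log (pow_pos hx n)]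

/-- For every `ℓ ≥ 1` and every 3-graph `G ∈ 𝒰_ℓ`, there is a constant
`C = C(G)` such that `r(G; q) ≤ 2 ^ (C · q^ℓ · log q)` for all `q ≥ 2`. -/
theorem stmt2 (ℓ : ℕ) (hℓ : 1 ≤ ℓ) (G : ThreeGraph) (hG : MemU ℓ G) :
    ∃ C : ℝ, 0 < C ∧ ∀ q : ℕ, 2 ≤ q →
      (rq G q : ℝ) ≤ (2 : ℝ) ^ (C * (q : ℝ) ^ ℓ * Real.log q) := by
  set s := G.verts.card
  set c := (s + 3) ^ (3 * ℓ + 1)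
  refine ⟨2 * c / Real.log 2, div_pos (by positivity) (Real.log_pos one_lt_two), fun q hq => ?_⟩
  have hr : rq G q ≤ (2 * q) ^ ramseyExponent s q ℓ (q * (s + 1)) :=
    rq_le_of_isRamseyBound (ramseyBoundAt (by omega) hℓ _ _ (fun _ => hG) (fun _ => le_rfl)
      (by simp [s]))
  have hpow : (2 * q) ^ ramseyExponent s q ℓ (q * (s + 1)) ≤ q ^ (2 * (c * q ^ ℓ)) :=
    calc (2 * q) ^ ramseyExponent s q ℓ (q * (s + 1))
        ≤ (q ^ 2) ^ ramseyExponent s q ℓ (q * (s + 1)) := Nat.pow_le_pow_left (by nlinarith) _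
      _ ≤ (q ^ 2) ^ (c * q ^ ℓ) :=
          Nat.pow_le_pow_right (by positivity) (ramseyExponent_le (by omega) hℓ)
      _ = q ^ (2 * (c * q ^ ℓ)) := (pow_mul _ _ _).symm
  calc (rq G q : ℝ) ≤ (q : ℝ) ^ (2 * (c * q ^ ℓ)) := by exact_mod_cast hr.trans hpow
    _ = (2 : ℝ) ^ (2 * c / Real.log 2 * (q : ℝ) ^ ℓ * Real.log q) := by
      rw [pow_eq_two_rpow (by positivity)]
      push_cast
      congr 1
      ring
end

section
/- If G is a 3-uniform hypergraph that is not tripartite, then r(G;q) > 2^{2q/27} for all sufficiently large q. -/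
/-!
Take maps `F j : [N] → [3]`, `j < q`, such that every triple of `[N]` is mapped injectively by
some `F j`. A union bound over the triples shows that such a family exists once
`C(N, 3) · 21^q < 27^q`, which holds for `N = 2^(⌊2q/27⌋ + 1)` when `q ≥ 22`. Colour each triple
by an index `j` that separates it. A copy of `G` in colour `i` would then be split into three
parts by `F i`, one vertex of each edge in each part, so a non-tripartite `G` has no
monochromatic copy and `r(G; q) > N`. That the Ramsey number is finite at all (so that it is
not the junk value `sInf ∅ = 0`) is the hypergraph Ramsey theorem, by the end-homogeneous set
induction on the uniformity.
-/
section Ramsey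

variable {α C : Type*}

def IsHomogeneous (χ : Finset α → C) (r : ℕ) (S : Finset α) : Prop :=
  ∃ c, ∀ t ⊆ S, t.card = r → χ t = c

def ramseyBound (k : ℕ) : ℕ → ℕ → ℕ
  | 0, s => s
  | r + 1, s => (fun M => ramseyBound k r M + 1)^[k * s] 0

lemma exists_homogeneous_zero (χ : Finset α → C) {s : ℕ} {X : Finset α} (hX : s ≤ X.card) :
    ∃ S ⊆ X, S.card = s ∧ IsHomogeneous χ 0 S := by
  obtain ⟨S, hSX, hS⟩ := Finset.exists_subset_card_eq hX
  exact ⟨S, hSX, hS, χ ∅, fun t _ ht => by rw [Finset.card_eq_zero.mp ht]⟩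

variable [LinearOrder α]

/-- The link colouring `t ↦ χ (insert a t)` at the least point `a` of `X` is made homogeneous on a
large part of `X`; recursing inside that part yields a set on which the colour of an
`(r + 1)`-set depends only on its least element. -/
lemma exists_endHomogeneous {k r : ℕ}
    (hr : ∀ (s : ℕ) (χ : Finset α → C) (X : Finset α), ramseyBound k r s ≤ X.card →
      ∃ S ⊆ X, S.card = s ∧ IsHomogeneous χ r S)
    (χ : Finset α → C) (m : ℕ) (X : Finset α)
    (hX : (fun M => ramseyBound k r M + 1)^[m] 0 ≤ X.card) :
    ∃ Y ⊆ X, Y.card = m ∧ ∃ c : α → C,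
      ∀ a ∈ Y, ∀ t ⊆ Y.filter (a < ·), t.card = r → χ (insert a t) = c a := by
  induction m generalizing X with
  | zero => exact ⟨∅, Finset.empty_subset _, rfl, fun _ => χ ∅, by simp⟩
  | succ m ih =>
    rw [Function.iterate_succ_apply'] at hX
    have hXne : X.Nonempty := Finset.card_pos.mp (by omega)
    set a := X.min' hXne
    have ha : a ∈ X := X.min'_mem hXne
    obtain ⟨Z, hZX, hZ, c₀, hc₀⟩ := hr ((fun M => ramseyBound k r M + 1)^[m] 0)
      (fun t => χ (insert a t)) (X.erase a) (by rw [Finset.card_erase_of_mem ha]; omega)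
    obtain ⟨Y, hYZ, hY, c, hc⟩ := ih Z hZ.ge
    have haY : a ∉ Y := fun h => Finset.notMem_erase a X (hZX (hYZ h))
    refine ⟨insert a Y, Finset.insert_subset ha ((hYZ.trans hZX).trans (X.erase_subset a)),
      by rw [Finset.card_insert_of_notMem haY, hY], Function.update c a c₀, ?_⟩
    intro b hb t ht htr
    rcases Finset.mem_insert.mp hb with rfl | hbY
    · rw [Function.update_self]
      refine hc₀ t (fun x hx => ?_) htr
      obtain ⟨hx, hbx⟩ := Finset.mem_filter.mp (ht hx)
      exact hYZ ((Finset.mem_insert.mp hx).resolve_left hbx.ne')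
    · have hab : a < b := X.min'_lt_of_mem_erase_min' hXne (hZX (hYZ hbY))
      rw [Function.update_of_ne hab.ne']
      refine hc b hbY t (fun x hx => ?_) htr
      obtain ⟨hx, hbx⟩ := Finset.mem_filter.mp (ht hx)
      refine Finset.mem_filter.mpr ⟨(Finset.mem_insert.mp hx).resolve_left ?_, hbx⟩
      rintro rfl
      exact lt_asymm hab hbx

variable [Fintype C]

theorem exists_homogeneous (r s : ℕ) (χ : Finset α → C) (X : Finset α)
    (hX : ramseyBound (Fintype.card C) r s ≤ X.card) :
    ∃ S ⊆ X, S.card = s ∧ IsHomogeneous χ r S := by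
  induction r generalizing s χ X with
  | zero => exact exists_homogeneous_zero χ hX
  | succ r ih =>
    obtain ⟨Y, hYX, hY, c, hc⟩ := exists_endHomogeneous ih χ _ X hX
    classical
    have : Nonempty C := ⟨χ ∅⟩
    obtain ⟨c₀, -, hc₀⟩ := Finset.exists_le_card_fiber_of_mul_le_card_of_maps_to
      (f := c) (t := Finset.univ) (fun a _ => Finset.mem_univ (c a)) Finset.univ_nonempty
      (by rw [Finset.card_univ, hY])
    obtain ⟨S, hSY, hS⟩ := Finset.exists_subset_card_eq hc₀
    refine ⟨S, hSY.trans ((Y.filter_subset _).trans hYX), hS, c₀, fun t ht htr => ?_⟩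
    have htne : t.Nonempty := Finset.card_pos.mp (by omega)
    set a := t.min' htne
    have ha : a ∈ S := ht (t.min'_mem htne)
    have hSY' : S ⊆ Y := hSY.trans (Y.filter_subset _)
    rw [← Finset.insert_erase (t.min'_mem htne)]
    refine (hc a (hSY' ha) (t.erase a) (fun x hx => Finset.mem_filter.mpr
      ⟨hSY' (ht (Finset.mem_of_mem_erase hx)), t.min'_lt_of_mem_erase_min' htne hx⟩) ?_).trans ?_
    · rw [Finset.card_erase_of_mem (t.min'_mem htne), htr, Nat.add_sub_cancel]
    · exact (Finset.mem_filter.mp (hSY ha)).2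

end Ramsey

section PerfectHash

variable {ι β γ : Type*}

def IsPerfectHashFamily (F : ι → β → γ) (k : ℕ) : Prop :=
  ∀ s : Finset β, s.card = k → ∃ j, Set.InjOn (F j) s

variable [Fintype β] [Fintype γ]

lemma card_injOn (s : Finset β) :
    Nat.card {h : β → γ // Set.InjOn h s} =
      (Fintype.card γ).descFactorial s.card * Fintype.card γ ^ (Fintype.card β - s.card) := by
  classical
  have e : {h : β → γ // Set.InjOn h s} ≃ (s ↪ γ) × ({x // x ∉ s} → γ) :=
    ((Equiv.piEquivPiSubtypeProd (· ∈ s) fun _ => γ).subtypeEquiv fun h => by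
      simp [Set.InjOn, Function.Injective]).trans <|
    Equiv.prodSubtypeFstEquivSubtypeProd.trans <|
    (Equiv.subtypeInjectiveEquivEmbedding _ _).prodCongr (Equiv.refl _)
  rw [Nat.card_congr e, Nat.card_prod, Nat.card_eq_fintype_card (α := s ↪ γ),
    Fintype.card_embedding_eq, Nat.card_fun, Nat.card_eq_fintype_card (α := {x // x ∉ s}),
    Fintype.card_subtype_compl, Fintype.card_coe, Nat.card_eq_fintype_card]

lemma card_not_injOn_mul (s : Finset β) :
    Nat.card {h : β → γ // ¬ Set.InjOn h s} * Fintype.card γ ^ s.card =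
      (Fintype.card γ ^ s.card - (Fintype.card γ).descFactorial s.card) *
        Fintype.card γ ^ Fintype.card β := by
  classical
  have hpow : Fintype.card γ ^ Fintype.card β =
      Fintype.card γ ^ s.card * Fintype.card γ ^ (Fintype.card β - s.card) := by
    rw [← pow_add, Nat.add_sub_cancel' s.card_le_univ]
  rw [Nat.card_eq_fintype_card, Fintype.card_subtype_compl, Fintype.card_fun,
    ← Nat.card_eq_fintype_card (α := {h : β → γ // Set.InjOn h s}), card_injOn, hpow,
    Nat.sub_mul, Nat.sub_mul]
  ring_nf

theorem exists_isPerfectHashFamily [Fintype ι] [Nonempty γ] (k : ℕ)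
    (h : (Fintype.card β).choose k *
        (Fintype.card γ ^ k - (Fintype.card γ).descFactorial k) ^ Fintype.card ι <
      Fintype.card γ ^ (k * Fintype.card ι)) :
    ∃ F : ι → β → γ, IsPerfectHashFamily F k := by
  classical
  set n := Fintype.card γ
  set bad : Finset β → Finset (ι → β → γ) := fun s => {F | ∀ j, ¬ Set.InjOn (F j) s}
  have hbad : ∀ s : Finset β, s.card = k → (bad s).card * n ^ (k * Fintype.card ι) =
      (n ^ k - n.descFactorial k) ^ Fintype.card ι * n ^ (Fintype.card β * Fintype.card ι) := by
    rintro s rfl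
    rw [← Fintype.card_subtype, ← Nat.card_eq_fintype_card,
      Nat.card_congr (Equiv.subtypePiEquivPi (p := fun (_ : ι) (h : β → γ) => ¬ Set.InjOn h s)),
      Nat.card_pi, Finset.prod_const, Finset.card_univ, pow_mul, pow_mul, ← mul_pow,
      card_not_injOn_mul, mul_pow]
  set B := (Finset.univ.powersetCard k).biUnion bad
  have hB : B.card * n ^ (k * Fintype.card ι) <
      n ^ (Fintype.card β * Fintype.card ι) * n ^ (k * Fintype.card ι) :=
    calc B.card * n ^ (k * Fintype.card ι)
        ≤ ∑ s ∈ Finset.univ.powersetCard k, (bad s).card * n ^ (k * Fintype.card ι) := by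
          rw [← Finset.sum_mul]; exact Nat.mul_le_mul_right _ Finset.card_biUnion_le
      _ = (Fintype.card β).choose k * (n ^ k - n.descFactorial k) ^ Fintype.card ι *
            n ^ (Fintype.card β * Fintype.card ι) := by
          rw [Finset.sum_congr rfl fun s hs => hbad s (Finset.mem_powersetCard.mp hs).2,
            Finset.sum_const, Finset.card_powersetCard, Finset.card_univ, smul_eq_mul, mul_assoc]
      _ < n ^ (k * Fintype.card ι) * n ^ (Fintype.card β * Fintype.card ι) :=
          Nat.mul_lt_mul_of_pos_right h (by positivity)
      _ = _ := mul_comm _ _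
  have hcard : B.card < (Finset.univ : Finset (ι → β → γ)).card := by
    rw [Finset.card_univ, Fintype.card_fun, Fintype.card_fun, ← pow_mul]
    exact Nat.lt_of_mul_lt_mul_right hB
  obtain ⟨F, -, hF⟩ := Finset.exists_mem_notMem_of_card_lt_card hcard
  refine ⟨F, fun s hs => ?_⟩
  by_contra! hs'
  exact hF (Finset.mem_biUnion.mpr ⟨s, Finset.mem_powersetCard.mpr ⟨Finset.subset_univ s, hs⟩,
    Finset.mem_filter.mpr ⟨Finset.mem_univ F, hs'⟩⟩)

end PerfectHash

theorem ramseyProp_ramseyBound {q : ℕ} (Gs : Fin q → ThreeGraph) :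
    RamseyProp Gs (ramseyBound q 3 (Finset.univ.sup fun i => (Gs i).verts.card) + 1) := by
  set s := Finset.univ.sup fun i => (Gs i).verts.card
  intro χ
  obtain ⟨S, -, hS, i, hi⟩ := exists_homogeneous 3 s χ Finset.univ (by simp)
  have hcard : (Gs i).verts.card ≤ S.card :=
    hS.symm ▸ Finset.le_sup (f := fun i => (Gs i).verts.card) (Finset.mem_univ i)
  have hencard : ((Gs i).verts : Set ℕ).encard ≤ (S : Set (Fin (ramseyBound q 3 s + 1))).encard :=
    by simpa using hcard
  obtain ⟨f, hfS, hf⟩ := (Gs i).verts.finite_toSet.exists_injOn_of_encard_le hencard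
  refine ⟨i, f, hf, fun e he => hi _ ?_ ?_⟩
  · exact Finset.image_subset_iff.mpr fun x hx => hfS ((Gs i).edge_sub e he hx)
  · rw [Finset.card_image_of_injOn (hf.mono (Finset.coe_subset.mpr ((Gs i).edge_sub e he))),
      (Gs i).edge_card e he]

lemma RamseyProp.mono {q : ℕ} {Gs : Fin q → ThreeGraph} {N N' : ℕ} (h : RamseyProp Gs N)
    (hN : N ≤ N') : RamseyProp Gs N' := by
  intro χ
  obtain ⟨i, f, hf, hχ⟩ := h fun e => χ (e.image (Fin.castLE hN))
  refine ⟨i, Fin.castLE hN ∘ f, (Fin.castLE_injective hN).comp_injOn hf, fun e he => ?_⟩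
  rw [← Finset.image_image]
  exact hχ e he

lemma lt_ramseyNumber_of_not_ramseyProp {q : ℕ} {Gs : Fin q → ThreeGraph} {N : ℕ}
    (h : ¬ RamseyProp Gs N) : N < ramseyNumber Gs := by
  by_contra! hle
  exact h ((Nat.sInf_mem (s := {N | RamseyProp Gs N}) ⟨_, ramseyProp_ramseyBound Gs⟩).mono hle)

lemma tripartite_of_injOn (G : ThreeGraph) (φ : ℕ → Fin 3) (hφ : ∀ e ∈ G.edges, Set.InjOn φ e) :
    Tripartite G := by
  have hpart : ∀ e ∈ G.edges, ∀ a, (e ∩ G.verts.filter (φ · = a)).card = 1 := by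
    intro e he a
    have hsurj : e.image φ = Finset.univ := Finset.eq_univ_of_card _ <| by
      rw [Finset.card_image_of_injOn (hφ e he), G.edge_card e he, Fintype.card_fin]
    obtain ⟨x, hx, rfl⟩ := Finset.mem_image.mp (hsurj ▸ Finset.mem_univ a)
    refine Finset.card_eq_one.mpr ⟨x, Finset.eq_singleton_iff_unique_mem.mpr
      ⟨Finset.mem_inter.mpr ⟨hx, Finset.mem_filter.mpr ⟨G.edge_sub e he hx, rfl⟩⟩, ?_⟩⟩
    intro y hy
    obtain ⟨hye, hy⟩ := Finset.mem_inter.mp hy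
    exact hφ e he hye hx (Finset.mem_filter.mp hy).2
  refine ⟨G.verts.filter (φ · = 0), G.verts.filter (φ · = 1), G.verts.filter (φ · = 2),
    ?_, ?_, ?_, ?_, fun e he => ⟨hpart e he 0, hpart e he 1, hpart e he 2⟩⟩
  · exact Finset.disjoint_filter.mpr fun x _ h0 h1 => by simp [h0] at h1
  · exact Finset.disjoint_filter.mpr fun x _ h0 h2 => by simp [h0] at h2
  · exact Finset.disjoint_filter.mpr fun x _ h1 h2 => by simp [h1] at h2
  · ext x
    simp only [Finset.mem_union, Finset.mem_filter]
    have : φ x = 0 ∨ φ x = 1 ∨ φ x = 2 := by omega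
    tauto

/-- Colour a triple by an index `j` at which `F j` is injective on it: a monochromatic copy of `G`
in colour `i` is then properly split into three parts by `F i`. -/
theorem not_ramseyProp_of_isPerfectHashFamily {q N : ℕ} [NeZero q] (Gs : Fin q → ThreeGraph)
    (hGs : ∀ i, ¬ Tripartite (Gs i)) {F : Fin q → Fin N → Fin 3} (hF : IsPerfectHashFamily F 3) :
    ¬ RamseyProp Gs N := by
  intro hR
  obtain ⟨i, f, hf, hχ⟩ := hR fun t => Classical.epsilon fun j => Set.InjOn (F j) t
  refine hGs i (tripartite_of_injOn (Gs i) (F i ∘ f) fun e he => ?_)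
  have hfe : Set.InjOn f e := hf.mono (Finset.coe_subset.mpr ((Gs i).edge_sub e he))
  have hinj := Classical.epsilon_spec (hF (e.image f) <| by
    rw [Finset.card_image_of_injOn hfe, (Gs i).edge_card e he])
  have hj : Classical.epsilon (fun j => Set.InjOn (F j) (e.image f : Set (Fin N))) = i := hχ e he
  rw [hj] at hinj
  exact hinj.comp hfe fun x hx => Finset.mem_coe.mpr (Finset.mem_image_of_mem f hx)

lemma choose_three_mul_pow_lt {q : ℕ} (hq : 22 ≤ q) :
    (2 ^ (2 * q / 27 + 1)).choose 3 * 21 ^ q < 27 ^ q := by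
  set k := 2 * q / 27 + 1
  have hk : 27 * k ≤ 2 * q + 27 := by omega
  have hbase : 2 ^ 27 * (4 * 21 ^ 9) ^ q < (27 ^ 9) ^ q := by
    obtain ⟨t, rfl⟩ := Nat.exists_eq_add_of_le hq
    rw [pow_add, pow_add, ← mul_assoc]
    exact Nat.mul_lt_mul_of_lt_of_le (by norm_num) (Nat.pow_le_pow_left (by norm_num) t)
      (by positivity)
  -- the ninth power clears the denominator of `3 * (2 * q / 27)`
  refine lt_of_pow_lt_pow_left₀ 9 (Nat.zero_le _) ?_
  calc ((2 ^ k).choose 3 * 21 ^ q) ^ 9 ≤ ((2 ^ k) ^ 3 * 21 ^ q) ^ 9 := by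
        gcongr; exact Nat.choose_le_pow _ _
    _ = 2 ^ (27 * k) * 21 ^ (9 * q) := by rw [mul_pow, ← pow_mul, ← pow_mul, ← pow_mul]; ring_nf
    _ ≤ 2 ^ (2 * q + 27) * 21 ^ (9 * q) := by gcongr; norm_num
    _ = 2 ^ 27 * (4 * 21 ^ 9) ^ q := by
        rw [mul_pow, pow_add, pow_mul, pow_mul', ← pow_mul 21 9 q]; ring
    _ < (27 ^ 9) ^ q := hbase
    _ = (27 ^ q) ^ 9 := by rw [← pow_mul, ← pow_mul, mul_comm]

/-- If `G` is a 3-uniform hypergraph that is not tripartite, then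
`r(G; q) > 2 ^ (2q/27)` for all sufficiently large `q`. -/
theorem stmt3 (G : ThreeGraph) (hG : ¬ Tripartite G) :
    ∃ q₀ : ℕ, ∀ q : ℕ, q₀ ≤ q → (2 : ℝ) ^ (2 * (q : ℝ) / 27) < (rq G q : ℝ) := by
  refine ⟨22, fun q hq => ?_⟩
  have : NeZero q := ⟨by omega⟩
  set k := 2 * q / 27 + 1
  obtain ⟨F, hF⟩ := exists_isPerfectHashFamily (ι := Fin q) (β := Fin (2 ^ k)) (γ := Fin 3) 3
    (by simpa [Nat.descFactorial, pow_mul] using choose_three_mul_pow_lt hq)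
  have hN : 2 ^ k < rq G q :=
    lt_ramseyNumber_of_not_ramseyProp (not_ramseyProp_of_isPerfectHashFamily _ (fun _ => hG) hF)
  have hk : 2 * (q : ℝ) / 27 < k := by
    rw [div_lt_iff₀ (by norm_num)]
    exact_mod_cast (by omega : 2 * q < k * 27)
  calc (2 : ℝ) ^ (2 * (q : ℝ) / 27) < (2 : ℝ) ^ (k : ℝ) :=
        Real.rpow_lt_rpow_of_exponent_lt (by norm_num) hk
    _ = ((2 ^ k : ℕ) : ℝ) := by rw [Real.rpow_natCast]; push_cast; rfl
    _ < rq G q := by exact_mod_cast hN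
end

section
/- For every even q ≥ 2, if the coloring φ_q of the triples of {0, 1, …, 2^{2^{q/2}} − 1} contains a monochromatic copy of a 3-graph G (i.e., there is an injection of V(G) into {0, …, 2^{2^{q/2}} − 1} under which all edges of G receive the same φ_q-color), then G ∈ U. -/
/-- `delta x y = max { i | bit(x,i) ≠ bit(y,i) }` (for `x ≠ y`; all differing bits are
at positions at most `max x y`). -/
def delta (x y : ℕ) : ℕ :=
  Nat.findGreatest (fun i => Nat.testBit x i ≠ Nat.testBit y i) (max x y)

/-- The stepping-up coloring: for `x < y < z`,
`φ(x,y,z) = (δ(δ(x,y), δ(y,z)), 1[δ(x,y) > δ(y,z)])`. -/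
def phiColor (x y z : ℕ) : ℕ × Bool :=
  (delta (delta x y) (delta y z), decide (delta y z < delta x y))

theorem delta_comm (x y : ℕ) : delta x y = delta y x := by
  simp only [delta, max_comm x y, ne_comm]

@[simp]
theorem delta_self (x : ℕ) : delta x x = 0 := by
  simp [delta, Nat.findGreatest_eq_zero_iff]

theorem testBit_eq_of_delta_lt {x y i : ℕ} (h : delta x y < i) :
    x.testBit i = y.testBit i := by
  by_cases hi : i ≤ max x y
  · simpa using Nat.findGreatest_is_greatest h hi
  · have hlt : max x y < 2 ^ i := (not_le.1 hi).trans i.lt_two_pow_self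
    rw [Nat.testBit_lt_two_pow ((le_max_left x y).trans_lt hlt),
      Nat.testBit_lt_two_pow ((le_max_right x y).trans_lt hlt)]

theorem testBit_delta_ne {x y : ℕ} (h : x ≠ y) :
    x.testBit (delta x y) ≠ y.testBit (delta x y) := by
  obtain ⟨i, hi⟩ : ∃ i, x.testBit i ≠ y.testBit i := by
    by_contra! hc
    exact h (Nat.eq_of_testBit_eq hc)
  have hle : i ≤ max x y := by
    by_contra hgt
    exact hi (testBit_eq_of_delta_lt ((Nat.findGreatest_le _).trans_lt (not_le.1 hgt)))
  exact Nat.findGreatest_spec (P := fun i => x.testBit i ≠ y.testBit i) hle hi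

theorem delta_eq_of_testBit {x y d : ℕ} (hne : x ≠ y) (hd : x.testBit d ≠ y.testBit d)
    (hup : ∀ i, d < i → x.testBit i = y.testBit i) : delta x y = d := by
  rcases lt_trichotomy (delta x y) d with h | h | h
  · exact absurd (testBit_eq_of_delta_lt h) hd
  · exact h
  · exact absurd (hup _ h) (testBit_delta_ne hne)

theorem testBit_delta_of_lt {x y : ℕ} (h : x < y) :
    x.testBit (delta x y) = false ∧ y.testBit (delta x y) = true := by
  have hne := testBit_delta_ne h.ne
  cases hx : x.testBit (delta x y)
  · simpa [hx] using hne
  · have hy : y.testBit (delta x y) = false := by simpa [hx] using hne.symm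
    exact absurd (Nat.lt_of_testBit _ hy hx fun j hj => (testBit_eq_of_delta_lt hj).symm)
      h.not_gt

theorem delta_ne_of_lt_of_lt {x y z : ℕ} (hxy : x < y) (hyz : y < z) :
    delta x y ≠ delta y z := by
  intro he
  have h1 := (testBit_delta_of_lt hxy).2
  rw [he, (testBit_delta_of_lt hyz).1] at h1
  exact Bool.false_ne_true h1

theorem delta_lt_of_lt_two_pow {x y n : ℕ} (hne : x ≠ y) (hx : x < 2 ^ n) (hy : y < 2 ^ n) :
    delta x y < n := by
  by_contra! hge
  have hpow := Nat.pow_le_pow_right two_pos hge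
  apply testBit_delta_ne hne
  rw [Nat.testBit_lt_two_pow (hx.trans_le hpow), Nat.testBit_lt_two_pow (hy.trans_le hpow)]

theorem delta_eq_add_delta_div {x y s : ℕ} (h : x / 2 ^ s ≠ y / 2 ^ s) :
    delta x y = s + delta (x / 2 ^ s) (y / 2 ^ s) := by
  apply delta_eq_of_testBit (fun he => h (by rw [he]))
  · simpa [Nat.testBit_div_two_pow, add_comm] using testBit_delta_ne h
  · intro i hi
    have := testBit_eq_of_delta_lt (x := x / 2 ^ s) (y := y / 2 ^ s) (i := i - s) (by omega)
    rwa [Nat.testBit_div_two_pow, Nat.testBit_div_two_pow, Nat.sub_add_cancel (by omega)]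
      at this

theorem delta_eq_delta_mod {x y s : ℕ} (h : x / 2 ^ s = y / 2 ^ s) :
    delta x y = delta (x % 2 ^ s) (y % 2 ^ s) := by
  by_cases hxy : x = y
  · rw [hxy, delta_self, delta_self]
  have hm : x % 2 ^ s ≠ y % 2 ^ s := fun hm => hxy (Nat.ext_div_mod h hm)
  have hd :=
    delta_lt_of_lt_two_pow hm (Nat.mod_lt _ (by positivity)) (Nat.mod_lt _ (by positivity))
  apply delta_eq_of_testBit hxy
  · simpa [hd] using testBit_delta_ne hm
  · intro i hi
    by_cases his : i < s
    · simpa [his] using testBit_eq_of_delta_lt hi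
    · have := congrArg (Nat.testBit · (i - s)) h
      simpa [Nat.testBit_div_two_pow, Nat.sub_add_cancel (not_lt.1 his)] using this

theorem delta_eq_of_lt_two_pow_le {a b p : ℕ} (ha : a < 2 ^ p) (hb : 2 ^ p ≤ b)
    (hb' : b < 2 ^ (p + 1)) : delta a b = p := by
  obtain ⟨r, rfl⟩ := Nat.exists_eq_add_of_le hb
  have hr : r < 2 ^ p := by rw [pow_succ] at hb'; omega
  apply delta_eq_of_testBit (by omega)
  · simp [Nat.testBit_lt_two_pow ha, Nat.testBit_two_pow_add_eq, Nat.testBit_lt_two_pow hr]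
  · intro i hi
    have hpow := Nat.pow_le_pow_right two_pos (Nat.succ_le_of_lt hi)
    rw [Nat.testBit_lt_two_pow (ha.trans_le (Nat.pow_le_pow_right two_pos hi.le)),
      Nat.testBit_lt_two_pow (hb'.trans_le hpow)]

theorem Nat.mod_lt_mod_iff_of_div_eq {X Y s : ℕ} (h : X / s = Y / s) :
    X % s < Y % s ↔ X < Y := by
  have hX := Nat.div_add_mod X s
  have hY := Nat.div_add_mod Y s
  rw [h] at hX
  omega

section Blocks

variable {k X Y Z : ℕ}

theorem div_two_pow_two_pow_lt (hX : X < 2 ^ 2 ^ (k + 1)) : X / 2 ^ 2 ^ k < 2 ^ 2 ^ k := by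
  rw [Nat.div_lt_iff_lt_mul (by positivity), ← pow_add, ← two_mul, ← pow_succ']
  exact hX

theorem delta_lt_of_div_eq (hne : X ≠ Y) (h : X / 2 ^ 2 ^ k = Y / 2 ^ 2 ^ k) :
    delta X Y < 2 ^ k := by
  rw [delta_eq_delta_mod h]
  exact delta_lt_of_lt_two_pow (fun hm => hne (Nat.ext_div_mod h hm))
    (Nat.mod_lt _ (by positivity)) (Nat.mod_lt _ (by positivity))

theorem delta_eq_of_div_ne (h : X / 2 ^ 2 ^ k ≠ Y / 2 ^ 2 ^ k) (hX : X < 2 ^ 2 ^ (k + 1))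
    (hY : Y < 2 ^ 2 ^ (k + 1)) :
    delta X Y = 2 ^ k + delta (X / 2 ^ 2 ^ k) (Y / 2 ^ 2 ^ k) ∧
      delta (X / 2 ^ 2 ^ k) (Y / 2 ^ 2 ^ k) < 2 ^ k :=
  ⟨delta_eq_add_delta_div h,
    delta_lt_of_lt_two_pow h (div_two_pow_two_pow_lt hX) (div_two_pow_two_pow_lt hY)⟩

theorem phiColor_fst_lt (hXY : X < Y) (hYZ : Y < Z) (hZ : Z < 2 ^ 2 ^ k) :
    (phiColor X Y Z).1 < k :=
  delta_lt_of_lt_two_pow (delta_ne_of_lt_of_lt hXY hYZ)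
    (delta_lt_of_lt_two_pow hXY.ne (hXY.trans (hYZ.trans hZ)) (hYZ.trans hZ))
    (delta_lt_of_lt_two_pow hYZ.ne (hYZ.trans hZ) hZ)

theorem phiColor_eq_of_div_eq {s : ℕ} (h₁ : X / 2 ^ s = Y / 2 ^ s)
    (h₂ : Y / 2 ^ s = Z / 2 ^ s) :
    phiColor X Y Z = phiColor (X % 2 ^ s) (Y % 2 ^ s) (Z % 2 ^ s) := by
  rw [phiColor, phiColor, delta_eq_delta_mod h₁, delta_eq_delta_mod h₂]

theorem phiColor_eq_of_div_ne (h₁ : X / 2 ^ 2 ^ k ≠ Y / 2 ^ 2 ^ k)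
    (h₂ : Y / 2 ^ 2 ^ k ≠ Z / 2 ^ 2 ^ k) (hX : X < 2 ^ 2 ^ (k + 1)) (hY : Y < 2 ^ 2 ^ (k + 1))
    (hZ : Z < 2 ^ 2 ^ (k + 1)) :
    phiColor X Y Z = phiColor (X / 2 ^ 2 ^ k) (Y / 2 ^ 2 ^ k) (Z / 2 ^ 2 ^ k) := by
  obtain ⟨e₁, d₁⟩ := delta_eq_of_div_ne h₁ hX hY
  obtain ⟨e₂, d₂⟩ := delta_eq_of_div_ne h₂ hY hZ
  have hdiv : ∀ d < 2 ^ k, (2 ^ k + d) / 2 ^ k = 1 := fun d hd => by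
    rw [Nat.add_div_left _ (by positivity), Nat.div_eq_of_lt hd]
  have hmod : ∀ d < 2 ^ k, (2 ^ k + d) % 2 ^ k = d := fun d hd => by
    rw [Nat.add_mod_left, Nat.mod_eq_of_lt hd]
  rw [phiColor, phiColor, e₁, e₂,
    delta_eq_delta_mod (s := k) (by rw [hdiv _ d₁, hdiv _ d₂]), hmod _ d₁, hmod _ d₂]
  simp

theorem phiColor_of_div_ne_of_div_eq (h₁ : X / 2 ^ 2 ^ k ≠ Y / 2 ^ 2 ^ k)
    (h₂ : Y / 2 ^ 2 ^ k = Z / 2 ^ 2 ^ k) (hYZ : Y < Z) (hX : X < 2 ^ 2 ^ (k + 1))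
    (hY : Y < 2 ^ 2 ^ (k + 1)) : phiColor X Y Z = (k, true) := by
  obtain ⟨e₁, d₁⟩ := delta_eq_of_div_ne h₁ hX hY
  have d₂ := delta_lt_of_div_eq hYZ.ne h₂
  rw [phiColor, e₁, delta_comm,
    delta_eq_of_lt_two_pow_le d₂ le_self_add (by rw [pow_succ]; omega)]
  simp only [Prod.mk.injEq, decide_eq_true_eq, true_and]
  omega

theorem phiColor_of_div_eq_of_div_ne (h₁ : X / 2 ^ 2 ^ k = Y / 2 ^ 2 ^ k)
    (h₂ : Y / 2 ^ 2 ^ k ≠ Z / 2 ^ 2 ^ k) (hXY : X < Y) (hY : Y < 2 ^ 2 ^ (k + 1))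
    (hZ : Z < 2 ^ 2 ^ (k + 1)) : phiColor X Y Z = (k, false) := by
  obtain ⟨e₂, d₂⟩ := delta_eq_of_div_ne h₂ hY hZ
  have d₁ := delta_lt_of_div_eq hXY.ne h₁
  rw [phiColor, e₂, delta_eq_of_lt_two_pow_le d₁ le_self_add (by rw [pow_succ]; omega)]
  simp only [Prod.mk.injEq, decide_eq_false_iff_not, true_and]
  omega

theorem phiColor_cases (hXY : X < Y) (hYZ : Y < Z) (hZ : Z < 2 ^ 2 ^ (k + 1)) :
    (X / 2 ^ 2 ^ k = Y / 2 ^ 2 ^ k ∧ Y / 2 ^ 2 ^ k = Z / 2 ^ 2 ^ k ∧ (phiColor X Y Z).1 < k) ∨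
    (X / 2 ^ 2 ^ k < Y / 2 ^ 2 ^ k ∧ Y / 2 ^ 2 ^ k < Z / 2 ^ 2 ^ k ∧ (phiColor X Y Z).1 < k) ∨
    (X / 2 ^ 2 ^ k < Y / 2 ^ 2 ^ k ∧ Y / 2 ^ 2 ^ k = Z / 2 ^ 2 ^ k ∧
      phiColor X Y Z = (k, true)) ∨
    (X / 2 ^ 2 ^ k = Y / 2 ^ 2 ^ k ∧ Y / 2 ^ 2 ^ k < Z / 2 ^ 2 ^ k ∧
      phiColor X Y Z = (k, false)) := by
  have hY := hYZ.trans hZ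
  have hX := hXY.trans hY
  have hle₁ : X / 2 ^ 2 ^ k ≤ Y / 2 ^ 2 ^ k := Nat.div_le_div_right hXY.le
  have hle₂ : Y / 2 ^ 2 ^ k ≤ Z / 2 ^ 2 ^ k := Nat.div_le_div_right hYZ.le
  by_cases h₁ : X / 2 ^ 2 ^ k = Y / 2 ^ 2 ^ k <;> by_cases h₂ : Y / 2 ^ 2 ^ k = Z / 2 ^ 2 ^ k
  · refine .inl ⟨h₁, h₂, ?_⟩
    rw [phiColor_eq_of_div_eq h₁ h₂]
    exact phiColor_fst_lt ((Nat.mod_lt_mod_iff_of_div_eq h₁).2 hXY)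
      ((Nat.mod_lt_mod_iff_of_div_eq h₂).2 hYZ) (Nat.mod_lt _ (by positivity))
  · exact .inr <| .inr <| .inr
      ⟨h₁, by omega, phiColor_of_div_eq_of_div_ne h₁ h₂ hXY hY hZ⟩
  · exact .inr <| .inr <| .inl
      ⟨by omega, h₂, phiColor_of_div_ne_of_div_eq h₁ h₂ hYZ hX hY⟩
  · refine .inr <| .inl ⟨by omega, by omega, ?_⟩
    rw [phiColor_eq_of_div_ne h₁ h₂ hX hY hZ]
    exact phiColor_fst_lt (by omega) (by omega) (div_two_pow_two_pow_lt hZ)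

end Blocks

theorem Finset.exists_eq_triple_of_injOn {α β : Type*} [DecidableEq α] [LinearOrder β]
    {e : Finset α} {f : α → β} (h3 : e.card = 3) (hf : Set.InjOn f e) :
    ∃ x y z, e = {x, y, z} ∧ f x < f y ∧ f y < f z := by
  obtain ⟨a, b, c, hab, hac, hbc, rfl⟩ := Finset.card_eq_three.1 h3
  have fab : f a ≠ f b := hf.ne (by simp) (by simp) hab
  have fac : f a ≠ f c := hf.ne (by simp) (by simp) hac
  have fbc : f b ≠ f c := hf.ne (by simp) (by simp) hbc
  have hperm : ∀ x y z, ({x, y, z} : Finset α) = {a, b, c} → f x < f y → f y < f z →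
      ∃ x y z, ({a, b, c} : Finset α) = {x, y, z} ∧ f x < f y ∧ f y < f z :=
    fun x y z h h₁ h₂ => ⟨x, y, z, h.symm, h₁, h₂⟩
  rcases fab.lt_or_gt with h₁ | h₁ <;> rcases fbc.lt_or_gt with h₂ | h₂ <;>
    rcases fac.lt_or_gt with h₃ | h₃
  all_goals first
    | exact absurd (h₁.trans h₂) h₃.not_gt
    | exact absurd (h₂.trans h₁) h₃.not_gt
    | exact hperm a b c rfl ‹_› ‹_›
    | exact hperm a c b (by grind) ‹_› ‹_›
    | exact hperm b a c (by grind) ‹_› ‹_›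
    | exact hperm b c a (by grind) ‹_› ‹_›
    | exact hperm c a b (by grind) ‹_› ‹_›
    | exact hperm c b a (by grind) ‹_› ‹_›

theorem Finset.filter_eq_empty_or_eq_self_of_forall_eq {α β : Type*} [DecidableEq β]
    {g : α → β} {e : Finset α} (hconst : ∀ x ∈ e, ∀ y ∈ e, g x = g y) (t : β) :
    e.filter (fun w => g w = t) = ∅ ∨ e.filter (fun w => g w = t) = e := by
  by_cases ht : ∃ x ∈ e, g x = t
  · obtain ⟨x, hx, rfl⟩ := ht
    exact .inr (Finset.filter_true_of_mem fun y hy => hconst y hy x hx)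
  · push Not at ht
    exact .inl (Finset.filter_false_of_mem ht)

section Fibers

variable {α β : Type*} [DecidableEq β] {g : α → β} {e : Finset α}

theorem card_filter_ne_two (h3 : e.card = 3)
    (hblock : (∀ x ∈ e, ∀ y ∈ e, g x = g y) ∨ Set.InjOn g e) (t : β) :
    (e.filter (fun w => g w = t)).card ≠ 2 := by
  rcases hblock with hconst | hinj
  · rcases Finset.filter_eq_empty_or_eq_self_of_forall_eq hconst t with h | h <;> simp [h, h3]
  · have : (e.filter (fun w => g w = t)).card ≤ 1 := Finset.card_le_one.2 fun a ha b hb => by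
      simp only [Finset.mem_filter] at ha hb
      exact hinj ha.1 hb.1 (ha.2.trans hb.2.symm)
    omega

theorem injOn_of_card_filter_eq_one (h3 : e.card = 3)
    (hblock : (∀ x ∈ e, ∀ y ∈ e, g x = g y) ∨ Set.InjOn g e) {t : β}
    (h1 : (e.filter (fun w => g w = t)).card = 1) : Set.InjOn g e := by
  refine hblock.resolve_left fun hconst => ?_
  rcases Finset.filter_eq_empty_or_eq_self_of_forall_eq hconst t with h | h <;> simp [h, h3] at h1

end Fibers

theorem Set.InjOn.update_insert {α β : Type*} [DecidableEq α] {g : α → β} {s : Set α}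
    {a : α} {b : β} (hg : Set.InjOn g s) (ha : a ∉ s) (hb : b ∉ g '' s) :
    Set.InjOn (Function.update g a b) (insert a s) := by
  have heq : Set.EqOn g (Function.update g a b) s := fun x hx =>
    (Function.update_of_ne (ne_of_mem_of_not_mem hx ha) _ _).symm
  rw [Set.injOn_insert ha, Function.update_self, ← heq.image_eq]
  exact ⟨hg.congr heq, hb⟩

namespace ThreeGraph

def induce (G : ThreeGraph) (U : Finset ℕ) : ThreeGraph where
  verts := U
  edges := G.edges.filter (fun e => e ⊆ U)
  edge_card e he := G.edge_card e (Finset.mem_filter.1 he).1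
  edge_sub _ he := (Finset.mem_filter.1 he).2

def collapse (G : ThreeGraph) (U : Finset ℕ) (v : ℕ) (hv : v ∉ G.verts) : ThreeGraph where
  verts := (G.verts \ U) ∪ {v}
  edges := G.edges.filter (fun e => e ∩ U = ∅) ∪
    (G.edges.filter (fun e => (e ∩ U).card = 1)).image (fun e => (e \ U) ∪ {v})
  edge_card := by
    simp only [Finset.mem_union, Finset.mem_filter, Finset.mem_image]
    rintro _ (⟨he, -⟩ | ⟨e, ⟨he, h1⟩, rfl⟩)
    · exact G.edge_card _ he
    · have hve : v ∉ e \ U := fun h => hv (G.edge_sub e he (Finset.mem_sdiff.1 h).1)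
      have := Finset.card_sdiff_add_card_inter e U
      rw [Finset.card_union_of_disjoint (Finset.disjoint_singleton_right.2 hve),
        Finset.card_singleton]
      have := G.edge_card e he
      omega
  edge_sub := by
    simp only [Finset.mem_union, Finset.mem_filter, Finset.mem_image]
    rintro _ (⟨he, h0⟩ | ⟨e, ⟨he, -⟩, rfl⟩)
    · refine Finset.subset_union_left.trans' (Finset.subset_sdiff.2 ?_)
      exact ⟨G.edge_sub _ he, Finset.disjoint_iff_inter_eq_empty.2 h0⟩
    · exact Finset.union_subset_union (Finset.sdiff_subset_sdiff (G.edge_sub e he) le_rfl) le_rfl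

variable {G : ThreeGraph} {U : Finset ℕ} {v : ℕ} {hv : v ∉ G.verts}

theorem mem_collapse_edges {e' : Finset ℕ} :
    e' ∈ (G.collapse U v hv).edges ↔ (e' ∈ G.edges ∧ e' ∩ U = ∅) ∨
      ∃ e ∈ G.edges, (e ∩ U).card = 1 ∧ (e \ U) ∪ {v} = e' := by
  simp [collapse, and_assoc]

theorem reducible_collapse (hU : U ⊆ G.verts) (h2 : 2 ≤ U.card) (hlt : U.card < G.verts.card)
    (hcol : ∀ e ∈ G.edges, (e ∩ U).card ≠ 2) :
    Reducible G (G.collapse U v hv) (G.induce U) :=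
  ⟨U, v, hU, h2, hlt, hcol, hv, rfl, rfl, rfl, rfl⟩

theorem card_collapse_verts_lt (hU : U ⊆ G.verts) (h2 : 2 ≤ U.card) :
    (G.collapse U v hv).verts.card < G.verts.card := by
  have := Finset.card_union_le (G.verts \ U) {v}
  have := Finset.card_sdiff_of_subset hU
  have := Finset.card_le_card hU
  simp only [collapse, Finset.card_singleton] at *
  omega

theorem inU1_collapse (hmeet : ∀ e ∈ G.edges, (e ∩ U).Nonempty) :
    InU1 (G.collapse U v hv) := by
  refine ⟨{v}, Finset.subset_union_right, fun e' he' => ?_⟩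
  rcases mem_collapse_edges.1 he' with ⟨he, h0⟩ | ⟨_, -, -, rfl⟩
  · exact absurd h0 (hmeet e' he).ne_empty
  · rw [Finset.union_inter_cancel_right, Finset.card_singleton]

end ThreeGraph

theorem MemU.mono_of_le {i j : ℕ} {G : ThreeGraph} (hij : i ≤ j) (h : MemU i G) : MemU j G := by
  induction j, hij using Nat.le_induction with
  | base => exact h
  | succ n _ ih => exact MemU.mono n G ih

theorem InU.of_reducible {G H F : ThreeGraph} (hred : Reducible G H F) (hH : InU H)
    (hF : InU F) : InU G := by
  obtain ⟨a, ha⟩ := hH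
  obtain ⟨b, hb⟩ := hF
  exact ⟨max a b + 2, MemU.reduce (max a b) G H F hred (ha.mono_of_le (by omega))
    (hb.mono_of_le (by omega))⟩

theorem InU1.inU {G : ThreeGraph} (h : InU1 G) : InU G := ⟨1, MemU.one G h⟩

theorem inU_of_edges_eq_empty {G : ThreeGraph} (h : G.edges = ∅) : InU G :=
  ⟨0, MemU.zero G ⟨G.verts, ∅, ∅, by simp, by simp, by simp, by simp, by simp [h]⟩⟩

theorem card_inter_eq_one_or_subset_of_lt_pair {α : Type*} [LinearOrder α] {g : ℕ → α}
    {V : Finset ℕ} {x y z : ℕ} (hx : x ∈ V) (hy : y ∈ V) (hz : z ∈ V) (hxy : g x < g y)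
    (hyz : g y = g z) :
    ({x, y, z} ∩ V.filter (fun w => ∃ w' ∈ V, g w < g w')).card = 1 ∨
      {x, y, z} ⊆ V.filter (fun w => ∃ w' ∈ V, g w < g w') := by
  by_cases hyU : ∃ w' ∈ V, g y < g w'
  · right
    simp only [Finset.insert_subset_iff, Finset.singleton_subset_iff, Finset.mem_filter]
    exact ⟨⟨hx, y, hy, hxy⟩, ⟨hy, hyU⟩, hz, hyz ▸ hyU⟩
  · left
    rw [Finset.card_eq_one]
    refine ⟨x, Finset.ext fun w => ?_⟩
    simp only [Finset.mem_inter, Finset.mem_insert, Finset.mem_singleton, Finset.mem_filter]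
    constructor
    · rintro ⟨rfl | rfl | rfl, -, hw⟩
      · rfl
      · exact absurd hw hyU
      · exact absurd (hyz ▸ hw) hyU
    · rintro rfl
      exact ⟨Or.inl rfl, hx, y, hy, hxy⟩

theorem inU_of_forall_edge_lt_pair {α : Type*} [LinearOrder α] (g : ℕ → α) (G : ThreeGraph)
    (hG : ∀ e ∈ G.edges, ∃ x y z, e = {x, y, z} ∧ g x < g y ∧ g y = g z) : InU G := by
  induction hn : G.verts.card using Nat.strong_induction_on generalizing G with
  | _ n ih =>
  set U := G.verts.filter (fun w => ∃ w' ∈ G.verts, g w < g w') with hU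
  have hUsub : U ⊆ G.verts := Finset.filter_subset _ _
  have hsplit : ∀ e ∈ G.edges, (e ∩ U).card = 1 ∨ e ⊆ U := fun e he => by
    obtain ⟨x, y, z, rfl, hxy, hyz⟩ := hG e he
    have hsub := G.edge_sub _ he
    simp only [Finset.insert_subset_iff, Finset.singleton_subset_iff] at hsub
    exact card_inter_eq_one_or_subset_of_lt_pair hsub.1 hsub.2.1 hsub.2.2 hxy hyz
  rcases Nat.lt_or_ge U.card 2 with hsmall | h2
  · refine InU1.inU ⟨U, hUsub, fun e he => (hsplit e he).resolve_right fun h => ?_⟩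
    have := G.edge_card e he ▸ Finset.card_le_card h
    omega
  have hlt : U.card < G.verts.card := by
    obtain ⟨wT, hwT, hmax⟩ := G.verts.exists_max_image g
      (Finset.card_pos.1 (by have := Finset.card_le_card hUsub; omega))
    refine Finset.card_lt_card (Finset.ssubset_iff_of_subset hUsub |>.2 ⟨wT, hwT, ?_⟩)
    simp only [hU, Finset.mem_filter, not_and, not_exists, not_lt]
    exact fun _ w hw => hmax w hw
  obtain ⟨v, hv⟩ := Infinite.exists_notMem_finset G.verts
  have hcol : ∀ e ∈ G.edges, (e ∩ U).card ≠ 2 := fun e he => by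
    rcases hsplit e he with h | h
    · omega
    · rw [Finset.inter_eq_left.2 h, G.edge_card e he]; omega
  refine InU.of_reducible (ThreeGraph.reducible_collapse (hv := hv) hUsub h2 hlt hcol) ?_ ?_
  · refine (ThreeGraph.inU1_collapse fun e he => ?_).inU
    rcases hsplit e he with h | h
    · exact Finset.card_pos.1 (by omega)
    · rw [Finset.inter_eq_left.2 h]
      exact Finset.card_pos.1 (by rw [G.edge_card e he]; omega)
  · exact ih U.card (hn ▸ hlt) _
      (fun e he => hG e (Finset.mem_filter.1 he).1) rfl

/-- `f` is a copy of `G` in the color `c` of `φ_q`, `q = 2 * k`. -/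
structure PhiMono (k : ℕ) (G : ThreeGraph) (f : ℕ → ℕ) (c : ℕ × Bool) : Prop where
  injOn : Set.InjOn f G.verts
  lt : ∀ v ∈ G.verts, f v < 2 ^ 2 ^ k
  color : ∀ e ∈ G.edges, ∀ x ∈ e, ∀ y ∈ e, ∀ z ∈ e,
    f x < f y → f y < f z → phiColor (f x) (f y) (f z) = c

namespace PhiMono

variable {k : ℕ} {G : ThreeGraph} {f : ℕ → ℕ} {c : ℕ × Bool} {e : Finset ℕ}

theorem exists_sorted (h : PhiMono k G f c) (he : e ∈ G.edges) :
    ∃ x y z, e = {x, y, z} ∧ f x < f y ∧ f y < f z ∧ f z < 2 ^ 2 ^ k ∧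
      phiColor (f x) (f y) (f z) = c := by
  have hsub := G.edge_sub e he
  obtain ⟨x, y, z, rfl, hxy, hyz⟩ :=
    Finset.exists_eq_triple_of_injOn (G.edge_card _ he) (h.injOn.mono (by exact_mod_cast hsub))
  exact ⟨x, y, z, rfl, hxy, hyz, h.lt z (hsub (by simp)),
    h.color _ he x (by simp) y (by simp) z (by simp) hxy hyz⟩

theorem edges_eq_empty (h : PhiMono 0 G f c) : G.edges = ∅ :=
  Finset.eq_empty_of_forall_notMem fun e he => by
    obtain ⟨x, y, z, -, hxy, hyz, hz, -⟩ := h.exists_sorted he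
    simp only [pow_zero, pow_one] at hz
    omega

theorem exists_pair_above (h : PhiMono (k + 1) G f (k, true)) (he : e ∈ G.edges) :
    ∃ x y z, e = {x, y, z} ∧ f x / 2 ^ 2 ^ k < f y / 2 ^ 2 ^ k ∧
      f y / 2 ^ 2 ^ k = f z / 2 ^ 2 ^ k := by
  obtain ⟨x, y, z, rfl, hxy, hyz, hz, hc⟩ := h.exists_sorted he
  rcases phiColor_cases hxy hyz hz with
    ⟨-, -, hk⟩ | ⟨-, -, hk⟩ | ⟨h₁, h₂, -⟩ | ⟨-, -, hk⟩
  · simp [hc] at hk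
  · simp [hc] at hk
  · exact ⟨x, y, z, rfl, h₁, h₂⟩
  · simp [hc] at hk

theorem exists_pair_below (h : PhiMono (k + 1) G f (k, false)) (he : e ∈ G.edges) :
    ∃ x y z, e = {x, y, z} ∧ f y / 2 ^ 2 ^ k < f x / 2 ^ 2 ^ k ∧
      f y / 2 ^ 2 ^ k = f z / 2 ^ 2 ^ k := by
  obtain ⟨x, y, z, rfl, hxy, hyz, hz, hc⟩ := h.exists_sorted he
  rcases phiColor_cases hxy hyz hz with
    ⟨-, -, hk⟩ | ⟨-, -, hk⟩ | ⟨-, -, hk⟩ | ⟨h₁, h₂, -⟩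
  · simp [hc] at hk
  · simp [hc] at hk
  · simp [hc] at hk
  · exact ⟨z, x, y, by grind, h₁ ▸ h₂, h₁⟩

theorem block_or_transversal (h : PhiMono (k + 1) G f c) (hct : c ≠ (k, true))
    (hcf : c ≠ (k, false)) (he : e ∈ G.edges) :
    (∀ x ∈ e, ∀ y ∈ e, f x / 2 ^ 2 ^ k = f y / 2 ^ 2 ^ k) ∨
      Set.InjOn (fun w => f w / 2 ^ 2 ^ k) e := by
  obtain ⟨x, y, z, rfl, hxy, hyz, hz, hc⟩ := h.exists_sorted he
  rcases phiColor_cases hxy hyz hz with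
    ⟨h₁, h₂, -⟩ | ⟨h₁, h₂, -⟩ | ⟨-, -, hk⟩ | ⟨-, -, hk⟩
  · left
    simp only [Finset.mem_insert, Finset.mem_singleton]
    rintro _ (rfl | rfl | rfl) _ (rfl | rfl | rfl) <;> omega
  · right
    simp only [Finset.coe_insert, Finset.coe_singleton, Set.InjOn, Set.mem_insert_iff,
      Set.mem_singleton_iff]
    rintro _ (rfl | rfl | rfl) _ (rfl | rfl | rfl) hw <;> first | rfl | omega
  · exact absurd (hc ▸ hk) hct
  · exact absurd (hc ▸ hk) hcf

theorem induce (h : PhiMono k G f c) {U : Finset ℕ} (hU : U ⊆ G.verts) :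
    PhiMono k (G.induce U) f c :=
  ⟨h.injOn.mono (by exact_mod_cast hU), fun v hv => h.lt v (hU hv),
    fun e he => h.color e (Finset.mem_filter.1 he).1⟩

theorem div (h : PhiMono (k + 1) G f c) (hinj : Set.InjOn (fun w => f w / 2 ^ 2 ^ k) G.verts) :
    PhiMono k G (fun w => f w / 2 ^ 2 ^ k) c where
  injOn := hinj
  lt v hv := div_two_pow_two_pow_lt (h.lt v hv)
  color e he x hx y hy z hz hxy hyz := by
    have hsub := G.edge_sub e he
    rw [← phiColor_eq_of_div_ne hxy.ne hyz.ne (h.lt x (hsub hx)) (h.lt y (hsub hy))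
      (h.lt z (hsub hz))]
    exact h.color e he x hx y hy z hz (Nat.lt_of_div_lt_div hxy) (Nat.lt_of_div_lt_div hyz)

theorem mod (h : PhiMono (k + 1) G f c) {t : ℕ} (ht : ∀ w ∈ G.verts, f w / 2 ^ 2 ^ k = t) :
    PhiMono k G (fun w => f w % 2 ^ 2 ^ k) c where
  injOn x hx y hy hxy := h.injOn hx hy (Nat.ext_div_mod ((ht x hx).trans (ht y hy).symm) hxy)
  lt _ _ := Nat.mod_lt _ (by positivity)
  color e he x hx y hy z hz hxy hyz := by
    have hsub := G.edge_sub e he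
    have h₁ := (ht x (hsub hx)).trans (ht y (hsub hy)).symm
    have h₂ := (ht y (hsub hy)).trans (ht z (hsub hz)).symm
    rw [← phiColor_eq_of_div_eq h₁ h₂]
    exact h.color e he x hx y hy z hz ((Nat.mod_lt_mod_iff_of_div_eq h₁).1 hxy)
      ((Nat.mod_lt_mod_iff_of_div_eq h₂).1 hyz)

/-- A transversal edge `e` of a monochromatic copy stays monochromatic when its vertices are
moved within their blocks. -/
theorem color_of_transversal (h : PhiMono (k + 1) G f c) (he : e ∈ G.edges)
    (htr : Set.InjOn (fun w => f w / 2 ^ 2 ^ k) e) {e' : Finset ℕ} {f' σ : ℕ → ℕ}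
    (hσ : ∀ w ∈ e', σ w ∈ e) (hσinj : Set.InjOn σ e')
    (hdiv : ∀ w ∈ e', f' w / 2 ^ 2 ^ k = f (σ w) / 2 ^ 2 ^ k)
    (hlt : ∀ w ∈ e', f' w < 2 ^ 2 ^ (k + 1)) :
    ∀ x ∈ e', ∀ y ∈ e', ∀ z ∈ e', f' x < f' y → f' y < f' z →
      phiColor (f' x) (f' y) (f' z) = c := by
  have hdivlt : ∀ a ∈ e', ∀ b ∈ e', f' a < f' b →
      f (σ a) / 2 ^ 2 ^ k < f (σ b) / 2 ^ 2 ^ k := fun a ha b hb hab => by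
    rw [← hdiv a ha, ← hdiv b hb]
    refine (Nat.div_le_div_right hab.le).lt_of_ne fun heq => hab.ne ?_
    rw [hσinj ha hb (htr (hσ a ha) (hσ b hb) ((hdiv a ha).symm.trans (heq.trans (hdiv b hb))))]
  intro x hx y hy z hz hxy hyz
  have h₁ := hdivlt x hx y hy hxy
  have h₂ := hdivlt y hy z hz hyz
  have hsub := G.edge_sub e he
  rw [phiColor_eq_of_div_ne (by rw [hdiv x hx, hdiv y hy]; exact h₁.ne)
      (by rw [hdiv y hy, hdiv z hz]; exact h₂.ne) (hlt x hx) (hlt y hy) (hlt z hz),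
    hdiv x hx, hdiv y hy, hdiv z hz, ← phiColor_eq_of_div_ne h₁.ne h₂.ne
      (h.lt _ (hsub (hσ x hx))) (h.lt _ (hsub (hσ y hy))) (h.lt _ (hsub (hσ z hz)))]
  exact h.color e he _ (hσ x hx) _ (hσ y hy) _ (hσ z hz) (Nat.lt_of_div_lt_div h₁)
    (Nat.lt_of_div_lt_div h₂)

theorem color_collapse_edge (h : PhiMono (k + 1) G f c) {U : Finset ℕ} {u u₀ v : ℕ}
    (hv : v ∉ G.verts) (he : e ∈ G.edges) (hu : e ∩ U = {u})
    (hu₀ : f u₀ / 2 ^ 2 ^ k = f u / 2 ^ 2 ^ k) (htr : Set.InjOn (fun w => f w / 2 ^ 2 ^ k) e)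
    (hlt : ∀ w ∈ (e \ U) ∪ {v}, Function.update f v (f u₀) w < 2 ^ 2 ^ (k + 1)) :
    ∀ x ∈ (e \ U) ∪ {v}, ∀ y ∈ (e \ U) ∪ {v}, ∀ z ∈ (e \ U) ∪ {v},
      Function.update f v (f u₀) x < Function.update f v (f u₀) y →
      Function.update f v (f u₀) y < Function.update f v (f u₀) z →
      phiColor (Function.update f v (f u₀) x) (Function.update f v (f u₀) y)
        (Function.update f v (f u₀) z) = c := by
  obtain ⟨hue, huU⟩ := Finset.mem_inter.1 (hu ▸ Finset.mem_singleton_self u)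
  have hfix : ∀ w ∈ e \ U, w ≠ v := fun w hw hwv =>
    hv (hwv ▸ G.edge_sub e he (Finset.mem_sdiff.1 hw).1)
  refine h.color_of_transversal he htr (σ := Function.update id v u) ?_ ?_ ?_ hlt
  · intro w hw
    rcases Finset.mem_union.1 hw with hw | hw
    · rw [Function.update_of_ne (hfix w hw)]
      exact (Finset.mem_sdiff.1 hw).1
    · rw [Finset.mem_singleton.1 hw, Function.update_self]
      exact hue
  · rw [Finset.coe_union, Finset.coe_singleton, Set.union_singleton]
    exact Set.injOn_id _ |>.update_insert (fun hv' => hfix v hv' rfl)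
      fun ⟨w, hw, hwu⟩ => (Finset.mem_sdiff.1 hw).2 ((show w = u from hwu) ▸ huU)
  · intro w hw
    rcases Finset.mem_union.1 hw with hw | hw
    · rw [Function.update_of_ne (hfix w hw), Function.update_of_ne (hfix w hw), id]
    · rw [Finset.mem_singleton.1 hw, Function.update_self, Function.update_self]
      exact hu₀

theorem collapse (h : PhiMono (k + 1) G f c) {U : Finset ℕ} {u₀ v : ℕ} (hv : v ∉ G.verts)
    (hU : U ⊆ G.verts) (hu₀ : u₀ ∈ U)
    (hblock : ∀ u ∈ U, f u / 2 ^ 2 ^ k = f u₀ / 2 ^ 2 ^ k)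
    (htr : ∀ e ∈ G.edges, (e ∩ U).card = 1 → Set.InjOn (fun w => f w / 2 ^ 2 ^ k) e) :
    PhiMono (k + 1) (G.collapse U v hv) (Function.update f v (f u₀)) c := by
  have hne : ∀ w ∈ G.verts, w ≠ v := fun w hw hwv => hv (hwv ▸ hw)
  have hmem : ∀ w ∈ (G.collapse U v hv).verts, w ≠ v → w ∈ G.verts := fun w hw hwv => by
    simp only [ThreeGraph.collapse, Finset.mem_union, Finset.mem_sdiff, Finset.mem_singleton,
      hwv, or_false] at hw
    exact hw.1
  have hlt :
      ∀ w ∈ (G.collapse U v hv).verts, Function.update f v (f u₀) w < 2 ^ 2 ^ (k + 1) :=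
    fun w hw => by
      rcases eq_or_ne w v with hwv | hwv
      · simpa [hwv] using h.lt u₀ (hU hu₀)
      · simpa [hwv] using h.lt w (hmem w hw hwv)
  refine ⟨?_, hlt, fun e' he' => ?_⟩
  · rw [ThreeGraph.collapse, Finset.coe_union, Finset.coe_singleton, Set.union_singleton]
    refine (h.injOn.mono (by simp)).update_insert (by simp [hv]) ?_
    rintro ⟨w, hw, hfw⟩
    exact (Finset.mem_sdiff.1 hw).2 (h.injOn (hU hu₀) (Finset.sdiff_subset hw) hfw.symm ▸ hu₀)
  rcases ThreeGraph.mem_collapse_edges.1 he' with ⟨he, -⟩ | ⟨e, he, h1, rfl⟩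
  · have hf : ∀ w ∈ e', Function.update f v (f u₀) w = f w := fun w hw =>
      Function.update_of_ne (hne w (G.edge_sub e' he hw)) _ _
    intro x hx y hy z hz
    rw [hf x hx, hf y hy, hf z hz]
    exact h.color e' he x hx y hy z hz
  obtain ⟨u, hu⟩ := Finset.card_eq_one.1 h1
  have huU : u ∈ U := (Finset.mem_inter.1 (hu ▸ Finset.mem_singleton_self u)).2
  exact h.color_collapse_edge hv he hu (hblock u huU).symm (htr e he h1)
    fun w hw => hlt w ((G.collapse U v hv).edge_sub _ he' hw)

theorem reducible_collapse_fiber (h : PhiMono (k + 1) G f c) (hct : c ≠ (k, true))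
    (hcf : c ≠ (k, false)) {w₁ v : ℕ} (hw₁ : w₁ ∈ G.verts) (hv : v ∉ G.verts)
    (hU2 : 2 ≤ (G.verts.filter (fun w => f w / 2 ^ 2 ^ k = f w₁ / 2 ^ 2 ^ k)).card)
    (hlt : (G.verts.filter (fun w => f w / 2 ^ 2 ^ k = f w₁ / 2 ^ 2 ^ k)).card < G.verts.card) :
    let U := G.verts.filter (fun w => f w / 2 ^ 2 ^ k = f w₁ / 2 ^ 2 ^ k)
    Reducible G (G.collapse U v hv) (G.induce U) ∧
      PhiMono (k + 1) (G.collapse U v hv) (Function.update f v (f w₁)) c := by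
  intro U
  have hUsub : U ⊆ G.verts := Finset.filter_subset _ _
  have hinter : ∀ e ∈ G.edges,
      e ∩ U = e.filter (fun w => f w / 2 ^ 2 ^ k = f w₁ / 2 ^ 2 ^ k) := fun e he => by
    rw [Finset.inter_filter, Finset.inter_eq_left.2 (G.edge_sub e he)]
  have hblock := fun e (he : e ∈ G.edges) => h.block_or_transversal hct hcf he
  refine ⟨ThreeGraph.reducible_collapse hUsub hU2 hlt fun e he =>
      hinter e he ▸ card_filter_ne_two (G.edge_card e he) (hblock e he) _,
    h.collapse hv hUsub (Finset.mem_filter.2 ⟨hw₁, rfl⟩)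
      (fun u hu => (Finset.mem_filter.1 hu).2) fun e he h1 => ?_⟩
  exact injOn_of_card_filter_eq_one (G.edge_card e he) (hblock e he) (hinter e he ▸ h1)

end PhiMono

theorem inU_of_phiMono {k : ℕ} {G : ThreeGraph} {f : ℕ → ℕ} {c : ℕ × Bool}
    (h : PhiMono k G f c) : InU G := by
  induction k generalizing G f c with
  | zero => exact inU_of_edges_eq_empty h.edges_eq_empty
  | succ k ihk =>
  induction hn : G.verts.card using Nat.strong_induction_on generalizing G f with
  | _ n ihn =>
  by_cases hct : c = (k, true)
  · subst hct
    exact inU_of_forall_edge_lt_pair _ G fun e he => h.exists_pair_above he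
  by_cases hcf : c = (k, false)
  · subst hcf
    refine inU_of_forall_edge_lt_pair (fun w => OrderDual.toDual (f w / 2 ^ 2 ^ k)) G
      fun e he => ?_
    obtain ⟨x, y, z, rfl, h₁, h₂⟩ := h.exists_pair_below he
    exact ⟨x, y, z, rfl, OrderDual.toDual_lt_toDual.2 h₁, congrArg _ h₂⟩
  by_cases hinj : Set.InjOn (fun w => f w / 2 ^ 2 ^ k) G.verts
  · exact ihk (h.div hinj)
  obtain ⟨w₁, hw₁, w₂, hw₂, hdiv, hne⟩ : ∃ w₁ ∈ G.verts, ∃ w₂ ∈ G.verts,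
      f w₁ / 2 ^ 2 ^ k = f w₂ / 2 ^ 2 ^ k ∧ w₁ ≠ w₂ := by
    simpa [Set.InjOn] using hinj
  set U := G.verts.filter (fun w => f w / 2 ^ 2 ^ k = f w₁ / 2 ^ 2 ^ k) with hU
  have hUsub : U ⊆ G.verts := Finset.filter_subset _ _
  have hblock : ∀ u ∈ U, f u / 2 ^ 2 ^ k = f w₁ / 2 ^ 2 ^ k := fun u hu =>
    (Finset.mem_filter.1 hu).2
  have hU2 : 2 ≤ U.card := by
    have : ({w₁, w₂} : Finset ℕ) ⊆ U := by
      simp [Finset.insert_subset_iff, hU, hw₁, hw₂, hdiv.symm]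
    simpa [Finset.card_pair hne] using Finset.card_le_card this
  rcases (Finset.card_le_card hUsub).lt_or_eq with hlt | heq
  · obtain ⟨v, hv⟩ := Infinite.exists_notMem_finset G.verts
    obtain ⟨hred, hH⟩ := h.reducible_collapse_fiber hct hcf hw₁ hv hU2 hlt
    exact InU.of_reducible hred (ihn _ (hn ▸ ThreeGraph.card_collapse_verts_lt hUsub hU2) hH rfl)
      (ihk ((h.induce hUsub).mod hblock))
  · have hUV : U = G.verts := Finset.eq_of_subset_of_card_le hUsub heq.ge
    exact ihk (h.mod fun w hw => hblock w (hUV ▸ hw))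

theorem stmt4_general (q : ℕ) (G : ThreeGraph) (f : ℕ → ℕ)
    (hinj : Set.InjOn f ↑G.verts) (hrange : ∀ v ∈ G.verts, f v < 2 ^ 2 ^ (q / 2))
    (c : ℕ × Bool)
    (hmono : ∀ e ∈ G.edges, ∀ x ∈ e, ∀ y ∈ e, ∀ z ∈ e,
      f x < f y → f y < f z → phiColor (f x) (f y) (f z) = c) :
    InU G :=
  inU_of_phiMono ⟨hinj, hrange, hmono⟩

/-- For every even `q ≥ 2`, if the coloring `φ_q` of the triples of
`{0, 1, …, 2^(2^(q/2)) − 1}` contains a monochromatic copy of a 3-graph `G` (i.e. there is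
an injection `f` of `V(G)` into `{0, …, 2^(2^(q/2)) − 1}` under which all edges of `G`
receive the same `φ_q`-color `c`), then `G ∈ 𝒰`. -/
theorem stmt4 (q : ℕ) (hq : 2 ≤ q) (hev : Even q) (G : ThreeGraph) (f : ℕ → ℕ)
    (hinj : Set.InjOn f ↑G.verts) (hrange : ∀ v ∈ G.verts, f v < 2 ^ 2 ^ (q / 2))
    (c : ℕ × Bool)
    (hmono : ∀ e ∈ G.edges, ∀ x ∈ e, ∀ y ∈ e, ∀ z ∈ e,
      f x < f y → f y < f z → phiColor (f x) (f y) (f z) = c) :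
    InU G :=
  stmt4_general q G f hinj hrange c hmono
end
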